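/- arXiv:2508.12882 — 6 statements merged into one kernel-verified Lean document; each statement's English description precedes it below -/
import Mathlib

section
/- Let u : ℝ × ℝ → ℂ be smooth. Then the zero-curvature equation ∂ₜU(Q;λ) − ∂ₓV(Q;λ) + U(Q;λ)V(Q;λ) − V(Q;λ)U(Q;λ) = 0 holds for every λ ∈ ℂ if and only if u solves the DNLS equation i·uₜ + uₓₓ + 2i·(|u|²u)ₓ = 0. -/
open Matrix Complex

/-- Partial derivative in the first (space) variable. -/
noncomputable def dx (f : ℝ × ℝ → ℂ) (p : ℝ × ℝ) : ℂ :=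
  deriv (fun x => f (x, p.2)) p.1

/-- Partial derivative in the second (time) variable. -/
noncomputable def dt (f : ℝ × ℝ → ℂ) (p : ℝ × ℝ) : ℂ :=
  deriv (fun t => f (p.1, t)) p.2

/-- The derivative nonlinear Schrödinger equation `i uₜ + uₓₓ + 2 i (|u|² u)ₓ = 0`. -/
def IsDNLSSolution (u : ℝ × ℝ → ℂ) : Prop :=
  ∀ p : ℝ × ℝ,
    Complex.I * dt u p + dx (fun q => dx u q) p +
      2 * Complex.I * dx (fun q => (Complex.normSq (u q) : ℂ) * u q) p = 0

/-- The Pauli matrix `σ₃ = diag(1, -1)`. -/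
noncomputable def sigma3 : Matrix (Fin 2) (Fin 2) ℂ := !![1, 0; 0, -1]

/-- The potential matrix `Q = [[0, i u], [i u*, 0]]`. -/
noncomputable def Qmat (u : ℝ × ℝ → ℂ) (p : ℝ × ℝ) : Matrix (Fin 2) (Fin 2) ℂ :=
  !![0, Complex.I * u p; Complex.I * (starRingEnd ℂ) (u p), 0]

/-- The Lax-pair matrix `U(Q;λ) = -2 i λ² σ₃ + 2 λ Q`. -/
noncomputable def Umat (u : ℝ × ℝ → ℂ) (l : ℂ) (p : ℝ × ℝ) : Matrix (Fin 2) (Fin 2) ℂ :=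
  (-2 * Complex.I * l ^ 2) • sigma3 + (2 * l) • Qmat u p

/-- The Lax-pair matrix `V(Q;λ) = (4 λ² + 2 Q²) U(Q;λ) + 2 i λ σ₃ Qₓ`. -/
noncomputable def Vmat (u : ℝ × ℝ → ℂ) (l : ℂ) (p : ℝ × ℝ) : Matrix (Fin 2) (Fin 2) ℂ :=
  ((4 * l ^ 2) • (1 : Matrix (Fin 2) (Fin 2) ℂ) + (2 : ℂ) • (Qmat u p * Qmat u p)) * Umat u l p
    + (2 * Complex.I * l) • (sigma3 * Matrix.of fun i j => dx (fun q => Qmat u q i j) p)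

section ZCAux

variable (u : ℝ × ℝ → ℂ) (l : ℂ)

lemma hdxQ01 (q : ℝ × ℝ) : dx (fun q' => Qmat u q' 0 1) q = I * dx u q := by
  have h : (fun q' => Qmat u q' 0 1) = fun q' => I * u q' := funext fun q' => by simp [Qmat]
  rw [h]; simp only [dx]; rw [deriv_const_mul_field]

lemma hdxc (q : ℝ × ℝ) : dx (fun q' => (starRingEnd ℂ) (u q')) q = (starRingEnd ℂ) (dx u q) := by
  simp only [dx, ← Complex.star_def]; exact deriv.star

lemma hdxQ10 (q : ℝ × ℝ) : dx (fun q' => Qmat u q' 1 0) q = I * (starRingEnd ℂ) (dx u q) := by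
  have h : (fun q' => Qmat u q' 1 0) = fun q' => I * (starRingEnd ℂ) (u q') := funext fun q' => by simp [Qmat]
  rw [h]; simp only [dx]; rw [deriv_const_mul_field]
  rw [show (fun x => (starRingEnd ℂ) (u (x, q.2))) = fun x => star (u (x, q.2)) from rfl, deriv.star]
  rfl

lemma hdxQ00 (q : ℝ × ℝ) : dx (fun q' => Qmat u q' 0 0) q = 0 := by
  have h : (fun q' => Qmat u q' 0 0) = fun _ => (0:ℂ) := funext fun q' => by simp [Qmat]
  rw [h]; simp only [dx]; simp

lemma hdxQ11 (q : ℝ × ℝ) : dx (fun q' => Qmat u q' 1 1) q = 0 := by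
  have h : (fun q' => Qmat u q' 1 1) = fun _ => (0:ℂ) := funext fun q' => by simp [Qmat]
  rw [h]; simp only [dx]; simp

lemma hU00 : (fun q => Umat u l q 0 0) = fun _ => -2*I*l^2 := by
  funext q; simp [Umat, Qmat, sigma3]
lemma hU11 : (fun q => Umat u l q 1 1) = fun _ => 2*I*l^2 := by
  funext q; simp [Umat, Qmat, sigma3]
lemma hU01 : (fun q => Umat u l q 0 1) = fun q => 2*l*I * u q := by
  funext q; simp [Umat, Qmat, sigma3]; ring
lemma hU10 : (fun q => Umat u l q 1 0) = fun q => 2*l*I * (starRingEnd ℂ) (u q) := by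
  funext q; simp [Umat, Qmat, sigma3]; ring

lemma hQx (p : ℝ × ℝ) : (Matrix.of fun i j => dx (fun q => Qmat u q i j) p)
    = !![0, I * dx u p; I * (starRingEnd ℂ) (dx u p), 0] := by
  ext i j; fin_cases i <;> fin_cases j <;>
    simp [hdxQ00, hdxQ01, hdxQ10, hdxQ11]

lemma hV00 : (fun q => Vmat u l q 0 0) = fun q => (4*l^2 - 2*(u q * (starRingEnd ℂ) (u q))) * (-2*I*l^2) := by
  funext q
  simp only [Vmat]
  rw [hQx]
  simp [Umat, Qmat, sigma3, Matrix.mul_apply, Fin.sum_univ_two, Matrix.one_apply, -mul_eq_mul_right_iff, -mul_eq_mul_left_iff]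
  ring_nf
  simp [show (I:ℂ)^3 = -I by rw [pow_succ, Complex.I_sq]; ring]
  try ring

lemma hV01 : (fun q => Vmat u l q 0 1) = fun q => (4*l^2 - 2*(u q * (starRingEnd ℂ) (u q))) * (2*l*I * u q) - 2*l * dx u q := by
  funext q
  simp only [Vmat]
  rw [hQx]
  simp [Umat, Qmat, sigma3, Matrix.mul_apply, Fin.sum_univ_two, Matrix.one_apply, -mul_eq_mul_right_iff, -mul_eq_mul_left_iff]
  ring_nf
  simp [show (I:ℂ)^3 = -I by rw [pow_succ, Complex.I_sq]; ring]
  try ring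

lemma hV10 : (fun q => Vmat u l q 1 0) = fun q => (4*l^2 - 2*(u q * (starRingEnd ℂ) (u q))) * (2*l*I * (starRingEnd ℂ) (u q)) + 2*l * (starRingEnd ℂ) (dx u q) := by
  funext q
  simp only [Vmat]
  rw [hQx]
  simp [Umat, Qmat, sigma3, Matrix.mul_apply, Fin.sum_univ_two, Matrix.one_apply, -mul_eq_mul_right_iff, -mul_eq_mul_left_iff]
  ring_nf
  simp [show (I:ℂ)^3 = -I by rw [pow_succ, Complex.I_sq]; ring]
  try ring

lemma hV11 : (fun q => Vmat u l q 1 1) = fun q => (4*l^2 - 2*(u q * (starRingEnd ℂ) (u q))) * (2*I*l^2) := by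
  funext q
  simp only [Vmat]
  rw [hQx]
  simp [Umat, Qmat, sigma3, Matrix.mul_apply, Fin.sum_univ_two, Matrix.one_apply, -mul_eq_mul_right_iff, -mul_eq_mul_left_iff]
  ring_nf
  simp [show (I:ℂ)^3 = -I by rw [pow_succ, Complex.I_sq]; ring]
  try ring

set_option maxHeartbeats 1000000 in
lemma key (hu : ContDiff ℝ (⊤ : ℕ∞) (fun p : ℝ × ℝ => u p)) (p : ℝ × ℝ) :
    (Matrix.of fun i j => dt (fun q => Umat u l q i j) p)
      - (Matrix.of fun i j => dx (fun q => Vmat u l q i j) p)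
      + Umat u l p * Vmat u l p - Vmat u l p * Umat u l p
    = !![0, 2*l*(Complex.I * dt u p + dx (fun q => dx u q) p
            + 2 * Complex.I * dx (fun q => (Complex.normSq (u q) : ℂ) * u q) p);
        -(2*l)*(starRingEnd ℂ) (Complex.I * dt u p + dx (fun q => dx u q) p
            + 2 * Complex.I * dx (fun q => (Complex.normSq (u q) : ℂ) * u q) p), 0] := by
  have hlx : ContDiff ℝ (⊤ : ℕ∞) (fun x : ℝ => u (x, p.2)) := hu.comp (contDiff_id.prodMk contDiff_const)
  have hlt : ContDiff ℝ (⊤ : ℕ∞) (fun t : ℝ => u (p.1, t)) := hu.comp (contDiff_const.prodMk contDiff_id)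
  have hdx1 : Differentiable ℝ (fun x : ℝ => u (x, p.2)) := hlx.differentiable (by simp)
  have hlx' : ContDiff ℝ ((⊤:ℕ∞) : WithTop ℕ∞) (fun x : ℝ => u (x, p.2)) := hlx.of_le (by simp)
  have hdx2 : Differentiable ℝ (deriv (fun x : ℝ => u (x, p.2))) :=
    ((contDiff_infty_iff_deriv.1 hlx').2).differentiable (by simp)
  have hdt1 : Differentiable ℝ (fun t : ℝ => u (p.1, t)) := hlt.differentiable (by simp)
  have Hf : HasDerivAt (fun x => u (x, p.2)) (dx u p) p.1 := (hdx1 p.1).hasDerivAt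
  have Hc : HasDerivAt (fun x => (starRingEnd ℂ) (u (x, p.2))) ((starRingEnd ℂ) (dx u p)) p.1 := by
    simpa only [Complex.star_def] using Hf.star
  have Hf' : HasDerivAt (fun x => deriv (fun y => u (y, p.2)) x) (dx (fun q => dx u q) p) p.1 :=
    (hdx2 p.1).hasDerivAt
  have Hc' : HasDerivAt (fun x => (starRingEnd ℂ) (deriv (fun y => u (y, p.2)) x))
      ((starRingEnd ℂ) (dx (fun q => dx u q) p)) p.1 := by
    simpa only [Complex.star_def] using Hf'.star
  have Hg : HasDerivAt (fun t => u (p.1, t)) (dt u p) p.2 := (hdt1 p.2).hasDerivAt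
  have Hgc : HasDerivAt (fun t => (starRingEnd ℂ) (u (p.1, t))) ((starRingEnd ℂ) (dt u p)) p.2 := by
    simpa only [Complex.star_def] using Hg.star
  -- dt of U entries
  have ht00 : dt (fun q => Umat u l q 0 0) p = 0 := by rw [hU00]; simp [dt]
  have ht11 : dt (fun q => Umat u l q 1 1) p = 0 := by rw [hU11]; simp [dt]
  have ht01 : dt (fun q => Umat u l q 0 1) p = 2*l*I * dt u p := by
    rw [hU01]; simp only [dt]; rw [deriv_const_mul_field]
  have ht10 : dt (fun q => Umat u l q 1 0) p = 2*l*I * (starRingEnd ℂ) (dt u p) := by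
    rw [hU10]; simp only [dt]; rw [deriv_const_mul_field]
    congr 1
    exact Hgc.deriv
  -- dx of V entries
  have hx00 : dx (fun q => Vmat u l q 0 0) p
      = (0 - 2*(dx u p * (starRingEnd ℂ) (u p) + u p * (starRingEnd ℂ) (dx u p))) * (-2*I*l^2) := by
    rw [hV00]
    exact HasDerivAt.deriv
      (((hasDerivAt_const p.1 (4*l^2)).sub ((Hf.mul Hc).const_mul 2)).mul_const (-2*I*l^2))
  have hx11 : dx (fun q => Vmat u l q 1 1) p
      = (0 - 2*(dx u p * (starRingEnd ℂ) (u p) + u p * (starRingEnd ℂ) (dx u p))) * (2*I*l^2) := by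
    rw [hV11]
    exact HasDerivAt.deriv
      (((hasDerivAt_const p.1 (4*l^2)).sub ((Hf.mul Hc).const_mul 2)).mul_const (2*I*l^2))
  have hx01 : dx (fun q => Vmat u l q 0 1) p
      = ((0 - 2*(dx u p * (starRingEnd ℂ) (u p) + u p * (starRingEnd ℂ) (dx u p))) * (2*l*I * u p)
        + (4*l^2 - 2*(u p * (starRingEnd ℂ) (u p))) * (2*l*I * dx u p))
        - 2*l * dx (fun q => dx u q) p := by
    rw [hV01]
    exact HasDerivAt.deriv
      ((((hasDerivAt_const p.1 (4*l^2)).sub ((Hf.mul Hc).const_mul 2)).mul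
        (Hf.const_mul (2*l*I))).sub (Hf'.const_mul (2*l)))
  have hx10 : dx (fun q => Vmat u l q 1 0) p
      = ((0 - 2*(dx u p * (starRingEnd ℂ) (u p) + u p * (starRingEnd ℂ) (dx u p))) * (2*l*I * (starRingEnd ℂ) (u p))
        + (4*l^2 - 2*(u p * (starRingEnd ℂ) (u p))) * (2*l*I * (starRingEnd ℂ) (dx u p)))
        + 2*l * (starRingEnd ℂ) (dx (fun q => dx u q) p) := by
    rw [hV10]
    exact HasDerivAt.deriv
      ((((hasDerivAt_const p.1 (4*l^2)).sub ((Hf.mul Hc).const_mul 2)).mul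
        (Hc.const_mul (2*l*I))).add (Hc'.const_mul (2*l)))
  have hnsq : dx (fun q => (Complex.normSq (u q) : ℂ) * u q) p
      = (dx u p * (starRingEnd ℂ) (u p) + u p * (starRingEnd ℂ) (dx u p)) * u p
        + (u p * (starRingEnd ℂ) (u p)) * dx u p := by
    have h : (fun q => (Complex.normSq (u q) : ℂ) * u q)
        = fun q => (u q * (starRingEnd ℂ) (u q)) * u q := funext fun q => by rw [Complex.mul_conj]
    rw [h]
    exact HasDerivAt.deriv ((Hf.mul Hc).mul Hf)
  -- value matrices
  have hUp : Umat u l p = !![-2*I*l^2, 2*l*I * u p; 2*l*I * (starRingEnd ℂ) (u p), 2*I*l^2] := by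
    ext i j; fin_cases i <;> fin_cases j <;> simp [Umat, Qmat, sigma3] <;> ring
  have hVp : Vmat u l p = !![(4*l^2 - 2*(u p * (starRingEnd ℂ) (u p))) * (-2*I*l^2),
      (4*l^2 - 2*(u p * (starRingEnd ℂ) (u p))) * (2*l*I * u p) - 2*l * dx u p;
      (4*l^2 - 2*(u p * (starRingEnd ℂ) (u p))) * (2*l*I * (starRingEnd ℂ) (u p)) + 2*l * (starRingEnd ℂ) (dx u p),
      (4*l^2 - 2*(u p * (starRingEnd ℂ) (u p))) * (2*I*l^2)] := by
    ext i j; fin_cases i <;> fin_cases j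
    · exact congrFun (hV00 u l) p
    · exact congrFun (hV01 u l) p
    · exact congrFun (hV10 u l) p
    · exact congrFun (hV11 u l) p
  have hdtU : (Matrix.of fun i j => dt (fun q => Umat u l q i j) p)
      = !![0, 2*l*I * dt u p; 2*l*I * (starRingEnd ℂ) (dt u p), 0] := by
    ext i j; fin_cases i <;> fin_cases j
    · exact ht00.trans (by simp)
    · exact ht01.trans (by simp)
    · exact ht10.trans (by simp)
    · exact ht11.trans (by simp)
  have hdxV : (Matrix.of fun i j => dx (fun q => Vmat u l q i j) p)
      = !![(0 - 2*(dx u p * (starRingEnd ℂ) (u p) + u p * (starRingEnd ℂ) (dx u p))) * (-2*I*l^2),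
          ((0 - 2*(dx u p * (starRingEnd ℂ) (u p) + u p * (starRingEnd ℂ) (dx u p))) * (2*l*I * u p)
            + (4*l^2 - 2*(u p * (starRingEnd ℂ) (u p))) * (2*l*I * dx u p)) - 2*l * dx (fun q => dx u q) p;
          ((0 - 2*(dx u p * (starRingEnd ℂ) (u p) + u p * (starRingEnd ℂ) (dx u p))) * (2*l*I * (starRingEnd ℂ) (u p))
            + (4*l^2 - 2*(u p * (starRingEnd ℂ) (u p))) * (2*l*I * (starRingEnd ℂ) (dx u p))) + 2*l * (starRingEnd ℂ) (dx (fun q => dx u q) p),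
          (0 - 2*(dx u p * (starRingEnd ℂ) (u p) + u p * (starRingEnd ℂ) (dx u p))) * (2*I*l^2)] := by
    ext i j; fin_cases i <;> fin_cases j
    · exact hx00.trans (by simp)
    · exact hx01.trans (by simp)
    · exact hx10.trans (by simp)
    · exact hx11.trans (by simp)
  rw [hdtU, hdxV, hUp, hVp, hnsq]
  ext i j; fin_cases i <;> fin_cases j <;>
    simp [Matrix.mul_apply, Fin.sum_univ_two, _root_.map_add, _root_.map_mul, map_ofNat, Complex.conj_conj, Complex.conj_I,
      -mul_eq_mul_right_iff, -mul_eq_mul_left_iff] <;> ring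

end ZCAux

/-- The zero-curvature equation `∂ₜU − ∂ₓV + UV − VU = 0` holds for every `λ ∈ ℂ`
if and only if `u` solves the DNLS equation. -/
theorem zero_curvature_iff_DNLS (u : ℝ × ℝ → ℂ) (hu : ContDiff ℝ (⊤ : ℕ∞) (fun p : ℝ × ℝ => u p)) :
    (∀ l : ℂ, ∀ p : ℝ × ℝ,
      (Matrix.of fun i j => dt (fun q => Umat u l q i j) p)
        - (Matrix.of fun i j => dx (fun q => Vmat u l q i j) p)
        + Umat u l p * Vmat u l p - Vmat u l p * Umat u l p = 0)
    ↔ IsDNLSSolution u := by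
  constructor
  · intro h p
    have hk := h 1 p
    rw [key u 1 hu p] at hk
    have h01 := congrFun (congrFun hk 0) 1
    simp only [Matrix.of_apply, Matrix.cons_val', Matrix.cons_val_one, Matrix.head_cons,
      Matrix.cons_val_zero, Matrix.empty_val', Matrix.cons_val_fin_one, Matrix.head_fin_const,
      Matrix.zero_apply, one_mul, mul_one] at h01
    linear_combination h01 / 2
  · intro h l p
    rw [key u l hu p]
    have h1 := h p
    rw [h1]
    ext i j; fin_cases i <;> fin_cases j <;> simp
end

section
/- (Equivalence of BT₀ and BT_∞.) Let u : ℝ × ℝ → ℂ be a smooth bounded solution of the DNLS equation, let λ₁,…,λ_N ∈ ℂ∖{0} satisfy λⱼ* ≠ λᵢ and λⱼ* ≠ −λᵢ for all i,j, and for each i let φᵢ : ℝ² → ℂ² be a smooth solution of the Lax pair at λ = λᵢ. Assume M(x,t) is invertible for every (x,t) and that 1 − 2φ⁽²⁾†Λ†(M†)⁻¹φ⁽²⁾ never vanishes. Then at every (x,t): u + i·∂ₓ(φ⁽²⁾†M⁻¹φ⁽¹⁾) = [(1 + 2φ⁽¹⁾†Λ†M⁻¹φ⁽¹⁾)/(1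 − 2φ⁽²⁾†Λ†(M†)⁻¹φ⁽²⁾)]·u + 4φ⁽²⁾†(Λ†)²M⁻¹φ⁽¹⁾/(1 − 2φ⁽²⁾†Λ†(M†)⁻¹φ⁽²⁾). -/
open Matrix Complex

/-- Componentwise spatial derivative of a vector-valued function. -/
noncomputable def dxv {n : ℕ} (f : ℝ × ℝ → Fin n → ℂ) (p : ℝ × ℝ) : Fin n → ℂ :=
  fun i => dx (fun q => f q i) p

/-- Componentwise temporal derivative of a vector-valued function. -/
noncomputable def dtv {n : ℕ} (f : ℝ × ℝ → Fin n → ℂ) (p : ℝ × ℝ) : Fin n → ℂ :=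
  fun i => dt (fun q => f q i) p

/-- `φ` solves the Lax pair `φₓ = U(Q;λ)φ`, `φₜ = V(Q;λ)φ` at spectral parameter `λ`. -/
def IsLaxSolution (u : ℝ × ℝ → ℂ) (l : ℂ) (φ : ℝ × ℝ → Fin 2 → ℂ) : Prop :=
  ∀ p : ℝ × ℝ, dxv φ p = Umat u l p *ᵥ φ p ∧ dtv φ p = Vmat u l p *ᵥ φ p

/-- The matrix `M` with entries
`M_{ij} = (φⱼ†φᵢ/(λⱼ* − λᵢ) − φⱼ†σ₃φᵢ/(λⱼ* + λᵢ)) λᵢ λⱼ*`. -/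
noncomputable def Mmat {N : ℕ} (l : Fin N → ℂ) (φ : Fin N → ℝ × ℝ → Fin 2 → ℂ)
    (p : ℝ × ℝ) : Matrix (Fin N) (Fin N) ℂ :=
  Matrix.of fun i j =>
    ((star (φ j p) ⬝ᵥ φ i p) / (starRingEnd ℂ (l j) - l i)
      - (star (φ j p) ⬝ᵥ (sigma3 *ᵥ φ i p)) / (starRingEnd ℂ (l j) + l i))
      * (l i * starRingEnd ℂ (l j))

/-- The vector `φ⁽ᵏ⁾ = (φ₁⁽ᵏ⁾, …, φ_N⁽ᵏ⁾)ᵀ` (with `k = 0` the first components,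
`k = 1` the second components). -/
noncomputable def phiVec {N : ℕ} (φ : Fin N → ℝ × ℝ → Fin 2 → ℂ) (k : Fin 2)
    (p : ℝ × ℝ) : Fin N → ℂ :=
  fun i => φ i p k

/-- The Bäcklund transformation `BT₀`: `u₀^[N] = u + i ∂ₓ(φ⁽²⁾† M⁻¹ φ⁽¹⁾)`. -/
noncomputable def BT0 {N : ℕ} (u : ℝ × ℝ → ℂ) (l : Fin N → ℂ)
    (φ : Fin N → ℝ × ℝ → Fin 2 → ℂ) (p : ℝ × ℝ) : ℂ :=
  u p + Complex.I *
    dx (fun q => star (phiVec φ 1 q) ⬝ᵥ ((Mmat l φ q)⁻¹ *ᵥ phiVec φ 0 q)) p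

/-- The Bäcklund transformation `BT_∞`. -/
noncomputable def BTinf {N : ℕ} (u : ℝ × ℝ → ℂ) (l : Fin N → ℂ)
    (φ : Fin N → ℝ × ℝ → Fin 2 → ℂ) (p : ℝ × ℝ) : ℂ :=
  (1 + 2 * (star (phiVec φ 0 p) ⬝ᵥ
      (((Matrix.diagonal l)ᴴ * (Mmat l φ p)⁻¹) *ᵥ phiVec φ 0 p)))
    / (1 - 2 * (star (phiVec φ 1 p) ⬝ᵥ
      (((Matrix.diagonal l)ᴴ * ((Mmat l φ p)ᴴ)⁻¹) *ᵥ phiVec φ 1 p))) * u p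
  + 4 * (star (phiVec φ 1 p) ⬝ᵥ
      ((((Matrix.diagonal l)ᴴ) ^ 2 * (Mmat l φ p)⁻¹) *ᵥ phiVec φ 0 p))
    / (1 - 2 * (star (phiVec φ 1 p) ⬝ᵥ
      (((Matrix.diagonal l)ᴴ * ((Mmat l φ p)ᴴ)⁻¹) *ᵥ phiVec φ 1 p)))


section MatDeriv
variable {n : ℕ}
attribute [local instance] Matrix.linftyOpNormedRing Matrix.linftyOpNormedAlgebra

noncomputable def entryCLM (i j : Fin n) : Matrix (Fin n) (Fin n) ℂ →L[ℝ] ℂ :=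
  LinearMap.mkContinuous
    { toFun := fun A => A i j
      map_add' := fun _ _ => rfl
      map_smul' := fun _ _ => rfl } 1 (by
    intro A
    rw [one_mul]
    have h1 : ‖A i j‖₊ ≤ ∑ k, ‖A i k‖₊ :=
      Finset.single_le_sum (f := fun k => ‖A i k‖₊) (fun _ _ => zero_le) (Finset.mem_univ j)
    have h2 : (∑ k, ‖A i k‖₊) ≤ ‖A‖₊ := by
      rw [Matrix.linfty_opNNNorm_def]
      exact Finset.le_sup (f := fun i => ∑ k, ‖A i k‖₊) (Finset.mem_univ i)
    exact_mod_cast (h1.trans h2))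

theorem hasDerivAt_entry {f : ℝ → Matrix (Fin n) (Fin n) ℂ} {f' : Matrix (Fin n) (Fin n) ℂ}
    {x : ℝ} (h : HasDerivAt f f' x) (i j : Fin n) :
    HasDerivAt (fun y => f y i j) (f' i j) x :=
  (entryCLM i j).hasFDerivAt.comp_hasDerivAt x h

theorem hasDerivAt_matrix {f : ℝ → Matrix (Fin n) (Fin n) ℂ} {f' : Matrix (Fin n) (Fin n) ℂ}
    {x : ℝ} (h : ∀ i j, HasDerivAt (fun y => f y i j) (f' i j) x) :
    HasDerivAt f f' x := by
  have h1 : ∀ y, f y = ∑ i, ∑ j, (f y i j) • Matrix.single i j (1 : ℂ) := by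
    intro y
    conv_lhs => rw [Matrix.matrix_eq_sum_single (f y)]
    refine Finset.sum_congr rfl fun i _ => Finset.sum_congr rfl fun j _ => ?_
    rw [Matrix.smul_single, smul_eq_mul, mul_one]
  have h2 : f' = ∑ i, ∑ j, (f' i j) • Matrix.single i j (1 : ℂ) := by
    conv_lhs => rw [Matrix.matrix_eq_sum_single f']
    refine Finset.sum_congr rfl fun i _ => Finset.sum_congr rfl fun j _ => ?_
    rw [Matrix.smul_single, smul_eq_mul, mul_one]
  rw [funext h1, h2]
  exact HasDerivAt.fun_sum fun i _ => HasDerivAt.fun_sum fun j _ => (h i j).smul_const _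

theorem hasDerivAt_inv_matrix {f : ℝ → Matrix (Fin n) (Fin n) ℂ} {f' : Matrix (Fin n) (Fin n) ℂ}
    {x : ℝ} (h : HasDerivAt f f' x) (hu : IsUnit (f x)) :
    HasDerivAt (fun y => (f y)⁻¹) (-((f x)⁻¹ * f' * (f x)⁻¹)) x := by
  letI : CompleteSpace (Matrix (Fin n) (Fin n) ℂ) :=
    by infer_instance
  obtain ⟨u, hu⟩ := hu
  have key : HasDerivAt (fun y => Ring.inverse (f y))
      ((-(ContinuousLinearMap.mulLeftRight ℝ _ (↑u⁻¹) (↑u⁻¹))) f') x := by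
    exact (hu ▸ hasFDerivAt_ringInverse (𝕜 := ℝ) u).comp_hasDerivAt x h
  simp only [Matrix.nonsing_inv_eq_ringInverse]
  convert key using 1
  have : (↑u⁻¹ : Matrix (Fin n) (Fin n) ℂ) = (f x)⁻¹ := by
    rw [← hu, Matrix.coe_units_inv]
  rw [← hu]
  simp only [ContinuousLinearMap.neg_apply, ContinuousLinearMap.mulLeftRight_apply,
    Ring.inverse_unit, Units.mul_inv_eq_iff_eq_mul]


variable {N : ℕ}

lemma vecMulVec_mulVec' (c d y : Fin N → ℂ) :
    vecMulVec c d *ᵥ y = (d ⬝ᵥ y) • c := by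
  funext i
  simp only [mulVec, dotProduct, vecMulVec_apply, Pi.smul_apply, smul_eq_mul, Finset.sum_mul]
  exact Finset.sum_congr rfl fun j _ => by ring

lemma diag_dot (d v y : Fin N → ℂ) :
    (Matrix.diagonal d *ᵥ v) ⬝ᵥ y = v ⬝ᵥ (Matrix.diagonal d *ᵥ y) := by
  simp only [dotProduct, mulVec_diagonal]
  exact Finset.sum_congr rfl fun j _ => by ring

lemma star_diag_mulVec (d v : Fin N → ℂ) :
    star (Matrix.diagonal d *ᵥ v) = Matrix.diagonal (star d) *ᵥ star v := by
  funext i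
  simp [mulVec_diagonal]

lemma sandwich (v w c d : Fin N → ℂ) (P R : Matrix (Fin N) (Fin N) ℂ) :
    star v ⬝ᵥ ((P * vecMulVec c d * R) *ᵥ w)
      = (star v ⬝ᵥ (P *ᵥ c)) * (d ⬝ᵥ (R *ᵥ w)) := by
  rw [← Matrix.mulVec_mulVec, ← Matrix.mulVec_mulVec, vecMulVec_mulVec', Matrix.mulVec_smul,
    dotProduct_smul, smul_eq_mul]
  ring

section Main
variable (l : Fin N → ℂ) (a b : Fin N → ℂ) (u : ℂ) (M : Matrix (Fin N) (Fin N) ℂ)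

lemma identI
    (hl : ∀ i j, starRingEnd ℂ (l j) ≠ l i ∧ starRingEnd ℂ (l j) ≠ -(l i))
    (hMdef : ∀ i j, M i j =
      ((starRingEnd ℂ (a j) * a i + starRingEnd ℂ (b j) * b i) / (starRingEnd ℂ (l j) - l i)
        - (starRingEnd ℂ (a j) * a i - starRingEnd ℂ (b j) * b i) / (starRingEnd ℂ (l j) + l i))
        * (l i * starRingEnd ℂ (l j))) :
    Matrix.diagonal l * M + Mᴴ * (Matrix.diagonal l)ᴴ
      = (-2 : ℂ) • vecMulVec (Matrix.diagonal l *ᵥ a) (star (Matrix.diagonal l *ᵥ a)) := by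
  ext i j
  have e1 : starRingEnd ℂ (l j) - l i ≠ 0 := sub_ne_zero.mpr (hl i j).1
  have e2 : starRingEnd ℂ (l j) + l i ≠ 0 := fun h => (hl i j).2 (by linear_combination h)
  have e3 : starRingEnd ℂ (l i) - l j ≠ 0 := sub_ne_zero.mpr (hl j i).1
  have e4 : starRingEnd ℂ (l i) + l j ≠ 0 := fun h => (hl j i).2 (by linear_combination h)
  have e3' : l i - starRingEnd ℂ (l j) ≠ 0 := by
    intro h; apply e1; linear_combination -h
  have e4' : l i + starRingEnd ℂ (l j) ≠ 0 := by
    intro h; apply e2; linear_combination h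
  have e5 : l i ^ 2 - (starRingEnd ℂ (l j)) ^ 2 ≠ 0 := by
    intro h
    rcases mul_eq_zero.mp (by linear_combination h :
      (l i - starRingEnd ℂ (l j)) * (l i + starRingEnd ℂ (l j)) = 0) with h' | h'
    exacts [e3' h', e4' h']
  simp only [Matrix.add_apply, Matrix.diagonal_mul, Matrix.mul_diagonal,
    Matrix.conjTranspose_apply, Matrix.diagonal_conjTranspose, Matrix.smul_apply,
    vecMulVec_apply, Matrix.mulVec_diagonal, Pi.star_apply, smul_eq_mul]
  rw [hMdef i j, hMdef j i]
  simp only [_root_.map_mul, map_sub, _root_.map_add, map_div₀, Complex.conj_conj, RCLike.star_def]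
  field_simp
  ring

lemma identII
    (hl : ∀ i j, starRingEnd ℂ (l j) ≠ l i ∧ starRingEnd ℂ (l j) ≠ -(l i))
    (hMdef : ∀ i j, M i j =
      ((starRingEnd ℂ (a j) * a i + starRingEnd ℂ (b j) * b i) / (starRingEnd ℂ (l j) - l i)
        - (starRingEnd ℂ (a j) * a i - starRingEnd ℂ (b j) * b i) / (starRingEnd ℂ (l j) + l i))
        * (l i * starRingEnd ℂ (l j))) :
    M * (Matrix.diagonal l)ᴴ + Matrix.diagonal l * Mᴴ
      = (2 : ℂ) • vecMulVec (Matrix.diagonal l *ᵥ b) (star (Matrix.diagonal l *ᵥ b)) := by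
  ext i j
  have e1 : starRingEnd ℂ (l j) - l i ≠ 0 := sub_ne_zero.mpr (hl i j).1
  have e2 : starRingEnd ℂ (l j) + l i ≠ 0 := fun h => (hl i j).2 (by linear_combination h)
  have e3' : l i - starRingEnd ℂ (l j) ≠ 0 := by
    intro h; apply e1; linear_combination -h
  have e4' : l i + starRingEnd ℂ (l j) ≠ 0 := by
    intro h; apply e2; linear_combination h
  have e5 : l i ^ 2 - (starRingEnd ℂ (l j)) ^ 2 ≠ 0 := by
    intro h
    rcases mul_eq_zero.mp (by linear_combination h :
      (l i - starRingEnd ℂ (l j)) * (l i + starRingEnd ℂ (l j)) = 0) with h' | h'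
    exacts [e3' h', e4' h']
  simp only [Matrix.add_apply, Matrix.diagonal_mul, Matrix.mul_diagonal,
    Matrix.conjTranspose_apply, Matrix.diagonal_conjTranspose, Matrix.smul_apply,
    vecMulVec_apply, Matrix.mulVec_diagonal, Pi.star_apply, smul_eq_mul]
  rw [hMdef i j, hMdef j i]
  simp only [_root_.map_mul, map_sub, _root_.map_add, map_div₀, Complex.conj_conj, RCLike.star_def]
  field_simp
  ring

lemma conv1 (v y : Fin N → ℂ) (X : Matrix (Fin N) (Fin N) ℂ) :
    star (Matrix.diagonal l *ᵥ v) ⬝ᵥ (X *ᵥ y)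
      = star v ⬝ᵥ (((Matrix.diagonal l)ᴴ * X) *ᵥ y) := by
  rw [star_diag_mulVec, diag_dot, Matrix.mulVec_mulVec, Matrix.diagonal_conjTranspose]

end Main

section Alg
variable {l a b : Fin N → ℂ} {u : ℂ} {M : Matrix (Fin N) (Fin N) ℂ}

lemma convH (l : Fin N → ℂ) (v y : Fin N → ℂ) (X : Matrix (Fin N) (Fin N) ℂ) :
    ((Matrix.diagonal l)ᴴ *ᵥ v) ⬝ᵥ (X *ᵥ y) = v ⬝ᵥ (((Matrix.diagonal l)ᴴ * X) *ᵥ y) := by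
  rw [Matrix.diagonal_conjTranspose, diag_dot, Matrix.mulVec_mulVec]

theorem key_algebra
    (hl : ∀ i j, starRingEnd ℂ (l j) ≠ l i ∧ starRingEnd ℂ (l j) ≠ -(l i))
    (hM : IsUnit M)
    (hMdef : ∀ i j, M i j =
      ((starRingEnd ℂ (a j) * a i + starRingEnd ℂ (b j) * b i) / (starRingEnd ℂ (l j) - l i)
        - (starRingEnd ℂ (a j) * a i - starRingEnd ℂ (b j) * b i) / (starRingEnd ℂ (l j) + l i))
        * (l i * starRingEnd ℂ (l j)))
    (hden : 1 - 2 * (star b ⬝ᵥ (((Matrix.diagonal l)ᴴ * (Mᴴ)⁻¹) *ᵥ b)) ≠ 0)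
    (a' b' : Fin N → ℂ) (M' : Matrix (Fin N) (Fin N) ℂ)
    (ha' : a' = (-(2*Complex.I)) • ((Matrix.diagonal l * Matrix.diagonal l) *ᵥ a)
        + (2*Complex.I*u) • (Matrix.diagonal l *ᵥ b))
    (hb' : star b' = (-(2*Complex.I*u)) • ((Matrix.diagonal l)ᴴ *ᵥ star a)
        + (-(2*Complex.I)) • (((Matrix.diagonal l)ᴴ * (Matrix.diagonal l)ᴴ) *ᵥ star b))
    (hM' : M' = (4*Complex.I) • (Matrix.diagonal l * Matrix.diagonal l * vecMulVec a (star a) * (Matrix.diagonal l)ᴴ)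
        + (-(4*Complex.I)) • (Matrix.diagonal l * vecMulVec b (star b) * ((Matrix.diagonal l)ᴴ * (Matrix.diagonal l)ᴴ))
        + (-(4*Complex.I*u)) • (Matrix.diagonal l * vecMulVec b (star a) * (Matrix.diagonal l)ᴴ)) :
    u + Complex.I * (star b' ⬝ᵥ (M⁻¹ *ᵥ a) + star b ⬝ᵥ ((-(M⁻¹ * M' * M⁻¹)) *ᵥ a)
        + star b ⬝ᵥ (M⁻¹ *ᵥ a')) =
      (1 + 2 * (star a ⬝ᵥ (((Matrix.diagonal l)ᴴ * M⁻¹) *ᵥ a))) / (1 - 2 * (star b ⬝ᵥ (((Matrix.diagonal l)ᴴ * (Mᴴ)⁻¹) *ᵥ b))) * u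
      + 4 * (star b ⬝ᵥ (((Matrix.diagonal l)ᴴ ^ 2 * M⁻¹) *ᵥ a)) / (1 - 2 * (star b ⬝ᵥ (((Matrix.diagonal l)ᴴ * (Mᴴ)⁻¹) *ᵥ b))) := by
  have hdet : IsUnit M.det := (Matrix.isUnit_iff_isUnit_det M).mp hM
  have hKM : M⁻¹ * M = 1 := Matrix.nonsing_inv_mul M hdet
  have hMK : M * M⁻¹ = 1 := Matrix.mul_nonsing_inv M hdet
  have hMHKH : Mᴴ * M⁻¹ᴴ = 1 := by
    rw [← Matrix.conjTranspose_mul, hKM, Matrix.conjTranspose_one]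
  have hKHMH : M⁻¹ᴴ * Mᴴ = 1 := by
    rw [← Matrix.conjTranspose_mul, hMK, Matrix.conjTranspose_one]
  rw [← Matrix.conjTranspose_nonsing_inv] at hden ⊢
  have hI := identI l a b M hl hMdef
  have hII := identII l a b M hl hMdef
  have hrr' : star b ⬝ᵥ (((Matrix.diagonal l)ᴴ * ((Matrix.diagonal l)ᴴ * M⁻¹)) *ᵥ a) = star b ⬝ᵥ (((Matrix.diagonal l)ᴴ ^ 2 * M⁻¹) *ᵥ a) := by
    rw [show (Matrix.diagonal l)ᴴ * ((Matrix.diagonal l)ᴴ * M⁻¹) = (Matrix.diagonal l)ᴴ ^ 2 * M⁻¹ by rw [pow_two, Matrix.mul_assoc]]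
  have F1 : star b ⬝ᵥ (((Matrix.diagonal l)ᴴ * M⁻¹ᴴ) *ᵥ b) + star b ⬝ᵥ ((M⁻¹ * Matrix.diagonal l) *ᵥ b) = 2 * ((star b ⬝ᵥ ((M⁻¹ * Matrix.diagonal l) *ᵥ b)) * (star b ⬝ᵥ (((Matrix.diagonal l)ᴴ * M⁻¹ᴴ) *ᵥ b))) := by
    have e := congrArg (fun X : Matrix (Fin N) (Fin N) ℂ =>
      star b ⬝ᵥ ((M⁻¹ * X * M⁻¹ᴴ) *ᵥ b)) hII
    rw [show M⁻¹ * (M * (Matrix.diagonal l)ᴴ + Matrix.diagonal l * Mᴴ) * M⁻¹ᴴ = (Matrix.diagonal l)ᴴ * M⁻¹ᴴ + M⁻¹ * Matrix.diagonal l by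
      rw [Matrix.mul_add, Matrix.add_mul]
      congr 1
      · rw [show M⁻¹ * (M * (Matrix.diagonal l)ᴴ) * M⁻¹ᴴ = (M⁻¹ * M) * ((Matrix.diagonal l)ᴴ * M⁻¹ᴴ) by
          simp only [Matrix.mul_assoc], hKM, Matrix.one_mul]
      · rw [show M⁻¹ * (Matrix.diagonal l * Mᴴ) * M⁻¹ᴴ = (M⁻¹ * Matrix.diagonal l) * (Mᴴ * M⁻¹ᴴ) by
          simp only [Matrix.mul_assoc], hMHKH, Matrix.mul_one]] at e
    rw [show M⁻¹ * ((2:ℂ) • vecMulVec (Matrix.diagonal l *ᵥ b) (star (Matrix.diagonal l *ᵥ b))) * M⁻¹ᴴ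
        = (2:ℂ) • (M⁻¹ * vecMulVec (Matrix.diagonal l *ᵥ b) (star (Matrix.diagonal l *ᵥ b)) * M⁻¹ᴴ) by
      simp only [Matrix.mul_smul, Matrix.smul_mul]] at e
    rw [Matrix.add_mulVec, dotProduct_add, Matrix.smul_mulVec, dotProduct_smul,
      smul_eq_mul, sandwich, conv1, Matrix.mulVec_mulVec] at e
    linear_combination e
  have F2 : star b ⬝ᵥ (((Matrix.diagonal l)ᴴ * M⁻¹ᴴ * Matrix.diagonal l) *ᵥ a) + star b ⬝ᵥ (((Matrix.diagonal l)ᴴ ^ 2 * M⁻¹) *ᵥ a) = -2 * ((star b ⬝ᵥ (((Matrix.diagonal l)ᴴ * M⁻¹ᴴ * Matrix.diagonal l) *ᵥ a)) * (star a ⬝ᵥ (((Matrix.diagonal l)ᴴ * M⁻¹) *ᵥ a))) := by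
    have e := congrArg (fun X : Matrix (Fin N) (Fin N) ℂ =>
      star b ⬝ᵥ (((Matrix.diagonal l)ᴴ * M⁻¹ᴴ * X * M⁻¹) *ᵥ a)) hI
    rw [show (Matrix.diagonal l)ᴴ * M⁻¹ᴴ * (Matrix.diagonal l * M + Mᴴ * (Matrix.diagonal l)ᴴ) * M⁻¹
        = (Matrix.diagonal l)ᴴ * M⁻¹ᴴ * Matrix.diagonal l + (Matrix.diagonal l)ᴴ * ((Matrix.diagonal l)ᴴ * M⁻¹) by
      rw [Matrix.mul_add, Matrix.add_mul]
      congr 1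
      · rw [show (Matrix.diagonal l)ᴴ * M⁻¹ᴴ * (Matrix.diagonal l * M) * M⁻¹ = (Matrix.diagonal l)ᴴ * M⁻¹ᴴ * Matrix.diagonal l * (M * M⁻¹) by
          simp only [Matrix.mul_assoc], hMK, Matrix.mul_one]
      · rw [show (Matrix.diagonal l)ᴴ * M⁻¹ᴴ * (Mᴴ * (Matrix.diagonal l)ᴴ) * M⁻¹ = (Matrix.diagonal l)ᴴ * (M⁻¹ᴴ * Mᴴ) * ((Matrix.diagonal l)ᴴ * M⁻¹) by
          simp only [Matrix.mul_assoc], hKHMH, Matrix.mul_one]] at e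
    rw [show (Matrix.diagonal l)ᴴ * M⁻¹ᴴ * ((-2:ℂ) • vecMulVec (Matrix.diagonal l *ᵥ a) (star (Matrix.diagonal l *ᵥ a))) * M⁻¹
        = (-2:ℂ) • (((Matrix.diagonal l)ᴴ * M⁻¹ᴴ) * vecMulVec (Matrix.diagonal l *ᵥ a) (star (Matrix.diagonal l *ᵥ a)) * M⁻¹) by
      simp only [Matrix.mul_smul, Matrix.smul_mul]] at e
    rw [Matrix.add_mulVec, dotProduct_add, Matrix.smul_mulVec, dotProduct_smul,
      smul_eq_mul, sandwich, conv1, Matrix.mulVec_mulVec, hrr'] at e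
    linear_combination e
  have F3 : star b ⬝ᵥ ((M⁻¹ * (Matrix.diagonal l * Matrix.diagonal l)) *ᵥ a) + star b ⬝ᵥ (((Matrix.diagonal l)ᴴ * M⁻¹ᴴ * Matrix.diagonal l) *ᵥ a) = 2 * ((star b ⬝ᵥ ((M⁻¹ * Matrix.diagonal l) *ᵥ b)) * (star b ⬝ᵥ (((Matrix.diagonal l)ᴴ * M⁻¹ᴴ * Matrix.diagonal l) *ᵥ a))) := by
    have e := congrArg (fun X : Matrix (Fin N) (Fin N) ℂ =>
      star b ⬝ᵥ ((M⁻¹ * X * (M⁻¹ᴴ * Matrix.diagonal l)) *ᵥ a)) hII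
    rw [show M⁻¹ * (M * (Matrix.diagonal l)ᴴ + Matrix.diagonal l * Mᴴ) * (M⁻¹ᴴ * Matrix.diagonal l)
        = (Matrix.diagonal l)ᴴ * M⁻¹ᴴ * Matrix.diagonal l + M⁻¹ * (Matrix.diagonal l * Matrix.diagonal l) by
      rw [Matrix.mul_add, Matrix.add_mul]
      congr 1
      · rw [show M⁻¹ * (M * (Matrix.diagonal l)ᴴ) * (M⁻¹ᴴ * Matrix.diagonal l) = (M⁻¹ * M) * ((Matrix.diagonal l)ᴴ * M⁻¹ᴴ * Matrix.diagonal l) by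
          simp only [Matrix.mul_assoc], hKM, Matrix.one_mul]
      · rw [show M⁻¹ * (Matrix.diagonal l * Mᴴ) * (M⁻¹ᴴ * Matrix.diagonal l) = M⁻¹ * (Matrix.diagonal l * ((Mᴴ * M⁻¹ᴴ) * Matrix.diagonal l)) by
          simp only [Matrix.mul_assoc], hMHKH, Matrix.one_mul]] at e
    rw [show M⁻¹ * ((2:ℂ) • vecMulVec (Matrix.diagonal l *ᵥ b) (star (Matrix.diagonal l *ᵥ b))) * (M⁻¹ᴴ * Matrix.diagonal l)
        = (2:ℂ) • (M⁻¹ * vecMulVec (Matrix.diagonal l *ᵥ b) (star (Matrix.diagonal l *ᵥ b)) * (M⁻¹ᴴ * Matrix.diagonal l)) by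
      simp only [Matrix.mul_smul, Matrix.smul_mul]] at e
    rw [Matrix.add_mulVec, dotProduct_add, Matrix.smul_mulVec, dotProduct_smul,
      smul_eq_mul, sandwich, conv1] at e
    rw [show (Matrix.diagonal l)ᴴ * (M⁻¹ᴴ * Matrix.diagonal l) = (Matrix.diagonal l)ᴴ * M⁻¹ᴴ * Matrix.diagonal l by
      simp only [Matrix.mul_assoc]] at e
    simp only [Matrix.mulVec_mulVec] at e
    linear_combination e
  have hT1 : star b' ⬝ᵥ (M⁻¹ *ᵥ a)
      = -(2*Complex.I*u) * (star a ⬝ᵥ (((Matrix.diagonal l)ᴴ * M⁻¹) *ᵥ a)) + -(2*Complex.I) * (star b ⬝ᵥ (((Matrix.diagonal l)ᴴ ^ 2 * M⁻¹) *ᵥ a)) := by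
    rw [hb', add_dotProduct, smul_dotProduct, smul_dotProduct, smul_eq_mul, smul_eq_mul,
      ← Matrix.mulVec_mulVec, convH, convH, convH, hrr']
  have hT3 : star b ⬝ᵥ (M⁻¹ *ᵥ a')
      = -(2*Complex.I) * (star b ⬝ᵥ ((M⁻¹ * (Matrix.diagonal l * Matrix.diagonal l)) *ᵥ a)) + (2*Complex.I*u) * (star b ⬝ᵥ ((M⁻¹ * Matrix.diagonal l) *ᵥ b)) := by
    rw [ha', Matrix.mulVec_add, Matrix.mulVec_smul, Matrix.mulVec_smul, dotProduct_add,
      dotProduct_smul, dotProduct_smul, smul_eq_mul, smul_eq_mul,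
      Matrix.mulVec_mulVec, Matrix.mulVec_mulVec]
  have hT2 : star b ⬝ᵥ ((-(M⁻¹ * M' * M⁻¹)) *ᵥ a)
      = -( (4*Complex.I) * ((star b ⬝ᵥ ((M⁻¹ * (Matrix.diagonal l * Matrix.diagonal l)) *ᵥ a)) * (star a ⬝ᵥ (((Matrix.diagonal l)ᴴ * M⁻¹) *ᵥ a))) + (-(4*Complex.I)) * ((star b ⬝ᵥ ((M⁻¹ * Matrix.diagonal l) *ᵥ b)) * (star b ⬝ᵥ (((Matrix.diagonal l)ᴴ ^ 2 * M⁻¹) *ᵥ a)))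
        + (-(4*Complex.I*u)) * ((star b ⬝ᵥ ((M⁻¹ * Matrix.diagonal l) *ᵥ b)) * (star a ⬝ᵥ (((Matrix.diagonal l)ᴴ * M⁻¹) *ᵥ a))) ) := by
    rw [Matrix.neg_mulVec, dotProduct_neg, hM']
    rw [show M⁻¹ * ((4*Complex.I) • (Matrix.diagonal l * Matrix.diagonal l * vecMulVec a (star a) * (Matrix.diagonal l)ᴴ)
        + (-(4*Complex.I)) • (Matrix.diagonal l * vecMulVec b (star b) * ((Matrix.diagonal l)ᴴ * (Matrix.diagonal l)ᴴ))
        + (-(4*Complex.I*u)) • (Matrix.diagonal l * vecMulVec b (star a) * (Matrix.diagonal l)ᴴ)) * M⁻¹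
        = (4*Complex.I) • ((M⁻¹ * (Matrix.diagonal l * Matrix.diagonal l)) * vecMulVec a (star a) * ((Matrix.diagonal l)ᴴ * M⁻¹))
        + (-(4*Complex.I)) • ((M⁻¹ * Matrix.diagonal l) * vecMulVec b (star b) * ((Matrix.diagonal l)ᴴ * ((Matrix.diagonal l)ᴴ * M⁻¹)))
        + (-(4*Complex.I*u)) • ((M⁻¹ * Matrix.diagonal l) * vecMulVec b (star a) * ((Matrix.diagonal l)ᴴ * M⁻¹)) by
      simp only [Matrix.mul_add, Matrix.add_mul, Matrix.mul_smul, Matrix.smul_mul,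
        Matrix.mul_assoc]]
    rw [Matrix.add_mulVec, Matrix.add_mulVec, Matrix.smul_mulVec,
      Matrix.smul_mulVec, Matrix.smul_mulVec,
      dotProduct_add, dotProduct_add, dotProduct_smul, dotProduct_smul, dotProduct_smul,
      smul_eq_mul, smul_eq_mul, smul_eq_mul, sandwich, sandwich, sandwich, hrr']
  rw [hT1, hT2, hT3]
  have h1 : (1 - 2 * (star b ⬝ᵥ (((Matrix.diagonal l)ᴴ * M⁻¹ᴴ) *ᵥ b))) * (1 - 2 * (star b ⬝ᵥ ((M⁻¹ * Matrix.diagonal l) *ᵥ b))) = 1 := by linear_combination (-2) * F1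
  have h2 : (star b ⬝ᵥ ((M⁻¹ * (Matrix.diagonal l * Matrix.diagonal l)) *ᵥ a)) * (1 + 2 * (star a ⬝ᵥ (((Matrix.diagonal l)ᴴ * M⁻¹) *ᵥ a))) = (star b ⬝ᵥ (((Matrix.diagonal l)ᴴ ^ 2 * M⁻¹) *ᵥ a)) * (1 - 2 * (star b ⬝ᵥ ((M⁻¹ * Matrix.diagonal l) *ᵥ b))) := by
    linear_combination (1 + 2*(star a ⬝ᵥ (((Matrix.diagonal l)ᴴ * M⁻¹) *ᵥ a))) * F3 + (2*(star b ⬝ᵥ ((M⁻¹ * Matrix.diagonal l) *ᵥ b)) - 1) * F2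
  have hID : Complex.I * ((-(2*Complex.I*u) * (star a ⬝ᵥ (((Matrix.diagonal l)ᴴ * M⁻¹) *ᵥ a)) + -(2*Complex.I) * (star b ⬝ᵥ (((Matrix.diagonal l)ᴴ ^ 2 * M⁻¹) *ᵥ a))) + (-( (4*Complex.I) * ((star b ⬝ᵥ ((M⁻¹ * (Matrix.diagonal l * Matrix.diagonal l)) *ᵥ a)) * (star a ⬝ᵥ (((Matrix.diagonal l)ᴴ * M⁻¹) *ᵥ a))) + (-(4*Complex.I)) * ((star b ⬝ᵥ ((M⁻¹ * Matrix.diagonal l) *ᵥ b)) * (star b ⬝ᵥ (((Matrix.diagonal l)ᴴ ^ 2 * M⁻¹) *ᵥ a)))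
        + (-(4*Complex.I*u)) * ((star b ⬝ᵥ ((M⁻¹ * Matrix.diagonal l) *ᵥ b)) * (star a ⬝ᵥ (((Matrix.diagonal l)ᴴ * M⁻¹) *ᵥ a))) )) + (-(2*Complex.I) * (star b ⬝ᵥ ((M⁻¹ * (Matrix.diagonal l * Matrix.diagonal l)) *ᵥ a)) + (2*Complex.I*u) * (star b ⬝ᵥ ((M⁻¹ * Matrix.diagonal l) *ᵥ b))))
      = 2*u*(star a ⬝ᵥ (((Matrix.diagonal l)ᴴ * M⁻¹) *ᵥ a)) + 2*(star b ⬝ᵥ (((Matrix.diagonal l)ᴴ ^ 2 * M⁻¹) *ᵥ a)) + 2*(star b ⬝ᵥ ((M⁻¹ * (Matrix.diagonal l * Matrix.diagonal l)) *ᵥ a)) - 2*u*(star b ⬝ᵥ ((M⁻¹ * Matrix.diagonal l) *ᵥ b)) + 4*((star b ⬝ᵥ ((M⁻¹ * (Matrix.diagonal l * Matrix.diagonal l)) *ᵥ a))*(star a ⬝ᵥ (((Matrix.diagonal l)ᴴ * M⁻¹) *ᵥ a))) - 4*((star b ⬝ᵥ ((M⁻¹ * Matrix.diagonal l) *ᵥ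 b))*(star b ⬝ᵥ (((Matrix.diagonal l)ᴴ ^ 2 * M⁻¹) *ᵥ a))) - 4*u*((star b ⬝ᵥ ((M⁻¹ * Matrix.diagonal l) *ᵥ b))*(star a ⬝ᵥ (((Matrix.diagonal l)ᴴ * M⁻¹) *ᵥ a))) := by
    linear_combination (-(2*u*(star a ⬝ᵥ (((Matrix.diagonal l)ᴴ * M⁻¹) *ᵥ a)) + 2*(star b ⬝ᵥ (((Matrix.diagonal l)ᴴ ^ 2 * M⁻¹) *ᵥ a)) + 2*(star b ⬝ᵥ ((M⁻¹ * (Matrix.diagonal l * Matrix.diagonal l)) *ᵥ a)) - 2*u*(star b ⬝ᵥ ((M⁻¹ * Matrix.diagonal l) *ᵥ b)) + 4*((star b ⬝ᵥ ((M⁻¹ * (Matrix.diagonal l * Matrix.diagonal l)) *ᵥ a))*(star a ⬝ᵥ (((Matrix.diagonal l)ᴴ * M⁻¹) *ᵥ a))) - 4*((star b ⬝ᵥ ((M⁻¹ * Matrix.diagonal l) *ᵥ b))*(star b ⬝ᵥ (((Matrix.diagonal l)ᴴ ^ 2 * M⁻¹) *ᵥ a))) - 4*u*((star b ⬝ᵥ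 ((M⁻¹ * Matrix.diagonal l) *ᵥ b))*(star a ⬝ᵥ (((Matrix.diagonal l)ᴴ * M⁻¹) *ᵥ a))))) * Complex.I_sq
  rw [hID, div_mul_eq_mul_div, ← add_div, eq_div_iff hden]
  linear_combination (2*(1 - 2*(star b ⬝ᵥ (((Matrix.diagonal l)ᴴ * M⁻¹ᴴ) *ᵥ b)))) * h2 + ((1 + 2*(star a ⬝ᵥ (((Matrix.diagonal l)ᴴ * M⁻¹) *ᵥ a)))*u + 4*(star b ⬝ᵥ (((Matrix.diagonal l)ᴴ ^ 2 * M⁻¹) *ᵥ a))) * h1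
end Alg

section DerivPhi
variable {u : ℝ × ℝ → ℂ} {l : ℂ} {φ : ℝ × ℝ → Fin 2 → ℂ}

theorem hasDerivAt_phi0
    (hφ_smooth : ContDiff ℝ (⊤ : ℕ∞) φ)
    (hφ : ∀ p : ℝ × ℝ, dxv φ p = Umat u l p *ᵥ φ p) (y t : ℝ) :
    HasDerivAt (fun z => φ (z, t) 0)
      (-(2*Complex.I)*l^2 * φ (y,t) 0 + 2*Complex.I*l * u (y,t) * φ (y,t) 1) y := by
  have h1 : ContDiff ℝ (⊤ : ℕ∞) (fun z : ℝ => φ (z, t)) :=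
    hφ_smooth.comp (contDiff_id.prodMk contDiff_const)
  have h2 := ((contDiff_pi.mp h1 0).differentiable (by simp) y).hasDerivAt
  have h3 := congrFun (hφ (y, t)) 0
  simp only [dxv, dx] at h3
  rw [h3] at h2
  convert h2 using 1
  · rfl
  simp only [Umat, sigma3, Qmat, Matrix.mulVec, dotProduct, Fin.sum_univ_two,
    Matrix.add_apply, Matrix.smul_apply, smul_eq_mul, Matrix.cons_val', Matrix.cons_val_zero,
    Matrix.cons_val_one, Matrix.head_cons, Matrix.empty_val', Matrix.cons_val_fin_one,
    Matrix.head_fin_const, Matrix.of_apply]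
  ring

theorem hasDerivAt_phi1
    (hφ_smooth : ContDiff ℝ (⊤ : ℕ∞) φ)
    (hφ : ∀ p : ℝ × ℝ, dxv φ p = Umat u l p *ᵥ φ p) (y t : ℝ) :
    HasDerivAt (fun z => φ (z, t) 1)
      (2*Complex.I*l * (starRingEnd ℂ) (u (y,t)) * φ (y,t) 0 + 2*Complex.I*l^2 * φ (y,t) 1) y := by
  have h1 : ContDiff ℝ (⊤ : ℕ∞) (fun z : ℝ => φ (z, t)) :=
    hφ_smooth.comp (contDiff_id.prodMk contDiff_const)
  have h2 := ((contDiff_pi.mp h1 1).differentiable (by simp) y).hasDerivAt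
  have h3 := congrFun (hφ (y, t)) 1
  simp only [dxv, dx] at h3
  rw [h3] at h2
  convert h2 using 1
  · rfl
  simp only [Umat, sigma3, Qmat, Matrix.mulVec, dotProduct, Fin.sum_univ_two,
    Matrix.add_apply, Matrix.smul_apply, smul_eq_mul, Matrix.cons_val', Matrix.cons_val_zero,
    Matrix.cons_val_one, Matrix.head_cons, Matrix.empty_val', Matrix.cons_val_fin_one,
    Matrix.head_fin_const, Matrix.of_apply]
  ring
end DerivPhi

section MEntry
variable {N : ℕ}

lemma hasDerivAt_Mentry (l : Fin N → ℂ) (φ : Fin N → ℝ × ℝ → Fin 2 → ℂ) (u : ℝ × ℝ → ℂ)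
    (x t : ℝ)
    (hl : ∀ i j, starRingEnd ℂ (l j) ≠ l i ∧ starRingEnd ℂ (l j) ≠ -(l i))
    (hA : ∀ i, HasDerivAt (fun z => φ i (z, t) 0)
      (-(2*Complex.I)*(l i)^2 * φ i (x,t) 0 + 2*Complex.I*(l i) * u (x,t) * φ i (x,t) 1) x)
    (hB : ∀ i, HasDerivAt (fun z => φ i (z, t) 1)
      (2*Complex.I*(l i) * (starRingEnd ℂ) (u (x,t)) * φ i (x,t) 0
        + 2*Complex.I*(l i)^2 * φ i (x,t) 1) x)
    (i j : Fin N) :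
    HasDerivAt (fun y => Mmat l φ (y, t) i j)
      (4*Complex.I*(l i)^2*starRingEnd ℂ (l j) * (starRingEnd ℂ (φ j (x,t) 0) * φ i (x,t) 0)
        - 4*Complex.I*(l i)*(starRingEnd ℂ (l j))^2 * (starRingEnd ℂ (φ j (x,t) 1) * φ i (x,t) 1)
        - 4*Complex.I*(u (x,t))*(l i)*starRingEnd ℂ (l j)
          * (φ i (x,t) 1 * starRingEnd ℂ (φ j (x,t) 0))) x := by
  have e1 : starRingEnd ℂ (l j) - l i ≠ 0 := sub_ne_zero.mpr (hl i j).1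
  have e2 : starRingEnd ℂ (l j) + l i ≠ 0 := fun h => (hl i j).2 (by linear_combination h)
  have hfun : (fun y => Mmat l φ (y, t) i j) = fun y =>
      ((starRingEnd ℂ (φ j (y,t) 0) * φ i (y,t) 0 + starRingEnd ℂ (φ j (y,t) 1) * φ i (y,t) 1)
          / (starRingEnd ℂ (l j) - l i)
        - (starRingEnd ℂ (φ j (y,t) 0) * φ i (y,t) 0 - starRingEnd ℂ (φ j (y,t) 1) * φ i (y,t) 1)
          / (starRingEnd ℂ (l j) + l i)) * (l i * starRingEnd ℂ (l j)) := by
    funext y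
    simp only [Mmat, Matrix.of_apply, dotProduct, sigma3, Matrix.mulVec, Fin.sum_univ_two,
      Pi.star_apply, RCLike.star_def, Matrix.cons_val', Matrix.cons_val_zero,
      Matrix.cons_val_one, Matrix.head_cons, Matrix.empty_val', Matrix.cons_val_fin_one,
      Matrix.head_fin_const]
    ring
  rw [hfun]
  have h := (((((hA j).star.mul (hA i)).add ((hB j).star.mul (hB i))).div_const
      (starRingEnd ℂ (l j) - l i)).sub
      (((((hA j).star.mul (hA i)).sub ((hB j).star.mul (hB i))).div_const
      (starRingEnd ℂ (l j) + l i)))).mul_const (l i * starRingEnd ℂ (l j))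
  refine h.congr_deriv ?_
  simp only [RCLike.star_def, map_add, _root_.map_mul, map_neg, map_pow, Complex.conj_I,
    Complex.conj_conj, map_ofNat]
  field_simp
  ring
end MEntry

/-- Equivalence of the two Bäcklund transformations: `u₀^[N] = u_∞^[N]` at every point. -/
theorem BT0_eq_BTinf {N : ℕ} (u : ℝ × ℝ → ℂ)
    (hu_smooth : ContDiff ℝ (⊤ : ℕ∞) u) (hu_bdd : ∃ C : ℝ, ∀ p : ℝ × ℝ, ‖u p‖ ≤ C)
    (hu : IsDNLSSolution u)
    (l : Fin N → ℂ) (hl0 : ∀ i, l i ≠ 0)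
    (hl : ∀ i j, starRingEnd ℂ (l j) ≠ l i ∧ starRingEnd ℂ (l j) ≠ -(l i))
    (φ : Fin N → ℝ × ℝ → Fin 2 → ℂ)
    (hφ_smooth : ∀ i, ContDiff ℝ (⊤ : ℕ∞) (φ i))
    (hφ : ∀ i, IsLaxSolution u (l i) (φ i))
    (hM : ∀ p : ℝ × ℝ, IsUnit (Mmat l φ p))
    (hden : ∀ p : ℝ × ℝ,
      1 - 2 * (star (phiVec φ 1 p) ⬝ᵥ
        (((Matrix.diagonal l)ᴴ * ((Mmat l φ p)ᴴ)⁻¹) *ᵥ phiVec φ 1 p)) ≠ 0) :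
    ∀ p : ℝ × ℝ, BT0 u l φ p = BTinf u l φ p := by
  intro p
  obtain ⟨x, t⟩ := p
  have hA : ∀ i, HasDerivAt (fun z => φ i (z, t) 0)
      (-(2*Complex.I)*(l i)^2 * φ i (x,t) 0 + 2*Complex.I*(l i) * u (x,t) * φ i (x,t) 1) x :=
    fun i => hasDerivAt_phi0 (hφ_smooth i) (fun q => (hφ i q).1) x t
  have hB : ∀ i, HasDerivAt (fun z => φ i (z, t) 1)
      (2*Complex.I*(l i) * (starRingEnd ℂ) (u (x,t)) * φ i (x,t) 0
        + 2*Complex.I*(l i)^2 * φ i (x,t) 1) x :=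
    fun i => hasDerivAt_phi1 (hφ_smooth i) (fun q => (hφ i q).1) x t
  set M'v : Matrix (Fin N) (Fin N) ℂ := Matrix.of fun i j =>
      4*Complex.I*(l i)^2*starRingEnd ℂ (l j) * (starRingEnd ℂ (φ j (x,t) 0) * φ i (x,t) 0)
        - 4*Complex.I*(l i)*(starRingEnd ℂ (l j))^2 * (starRingEnd ℂ (φ j (x,t) 1) * φ i (x,t) 1)
        - 4*Complex.I*(u (x,t))*(l i)*starRingEnd ℂ (l j)
          * (φ i (x,t) 1 * starRingEnd ℂ (φ j (x,t) 0)) with hM'v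
  have hMent : ∀ i j, HasDerivAt (fun y => Mmat l φ (y, t) i j) (M'v i j) x :=
    fun i j => hasDerivAt_Mentry l φ u x t hl hA hB i j
  have hMf : HasDerivAt (fun y => Mmat l φ (y, t)) M'v x := hasDerivAt_matrix hMent
  have hKf : HasDerivAt (fun y => (Mmat l φ (y, t))⁻¹)
      (-((Mmat l φ (x,t))⁻¹ * M'v * (Mmat l φ (x,t))⁻¹)) x :=
    hasDerivAt_inv_matrix hMf (hM (x, t))
  have hKent : ∀ i j, HasDerivAt (fun y => (Mmat l φ (y, t))⁻¹ i j)
      ((-((Mmat l φ (x,t))⁻¹ * M'v * (Mmat l φ (x,t))⁻¹)) i j) x :=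
    fun i j => hasDerivAt_entry hKf i j
  set a'v : Fin N → ℂ := fun i =>
    -(2*Complex.I)*(l i)^2 * φ i (x,t) 0 + 2*Complex.I*(l i) * u (x,t) * φ i (x,t) 1 with ha'v
  set b'v : Fin N → ℂ := fun i =>
    2*Complex.I*(l i) * (starRingEnd ℂ) (u (x,t)) * φ i (x,t) 0
      + 2*Complex.I*(l i)^2 * φ i (x,t) 1 with hb'v
  -- derivative of the scalar function
  have hf : HasDerivAt
      (fun y => star (phiVec φ 1 (y,t)) ⬝ᵥ ((Mmat l φ (y,t))⁻¹ *ᵥ phiVec φ 0 (y,t)))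
      (star b'v ⬝ᵥ ((Mmat l φ (x,t))⁻¹ *ᵥ phiVec φ 0 (x,t))
        + star (phiVec φ 1 (x,t)) ⬝ᵥ
          ((-((Mmat l φ (x,t))⁻¹ * M'v * (Mmat l φ (x,t))⁻¹)) *ᵥ phiVec φ 0 (x,t))
        + star (phiVec φ 1 (x,t)) ⬝ᵥ ((Mmat l φ (x,t))⁻¹ *ᵥ a'v)) x := by
    have hterm : ∀ i : Fin N, HasDerivAt
        (fun y => star (φ i (y,t) 1) * (∑ j, (Mmat l φ (y,t))⁻¹ i j * φ j (y,t) 0))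
        (star (b'v i) * (∑ j, (Mmat l φ (x,t))⁻¹ i j * φ j (x,t) 0)
          + star (φ i (x,t) 1) * (∑ j,
            ((-((Mmat l φ (x,t))⁻¹ * M'v * (Mmat l φ (x,t))⁻¹)) i j * φ j (x,t) 0
              + (Mmat l φ (x,t))⁻¹ i j * a'v j))) x := by
      intro i
      exact ((hB i).star.mul (HasDerivAt.fun_sum fun j _ => (hKent i j).mul (hA j)))
    have hsum := HasDerivAt.fun_sum (fun i (_ : i ∈ Finset.univ) => hterm i)
    have hfun : (fun y => ∑ i, star (φ i (y,t) 1)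
          * (∑ j, (Mmat l φ (y,t))⁻¹ i j * φ j (y,t) 0))
        = fun y => star (phiVec φ 1 (y,t)) ⬝ᵥ ((Mmat l φ (y,t))⁻¹ *ᵥ phiVec φ 0 (y,t)) := by
      funext y
      simp [phiVec, dotProduct, Matrix.mulVec]
    rw [hfun] at hsum
    convert hsum using 1
    · rfl
    simp only [dotProduct, Matrix.mulVec, phiVec, Pi.star_apply, mul_add,
      Finset.sum_add_distrib]
    ring
  -- convert BT0 to the algebraic statement
  have hdx : dx (fun q => star (phiVec φ 1 q) ⬝ᵥ ((Mmat l φ q)⁻¹ *ᵥ phiVec φ 0 q)) (x, t)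
      = star b'v ⬝ᵥ ((Mmat l φ (x,t))⁻¹ *ᵥ phiVec φ 0 (x,t))
        + star (phiVec φ 1 (x,t)) ⬝ᵥ
          ((-((Mmat l φ (x,t))⁻¹ * M'v * (Mmat l φ (x,t))⁻¹)) *ᵥ phiVec φ 0 (x,t))
        + star (phiVec φ 1 (x,t)) ⬝ᵥ ((Mmat l φ (x,t))⁻¹ *ᵥ a'v) := hf.deriv
  show u (x,t) + Complex.I * _ = _
  rw [hdx]
  -- apply the algebraic identity
  refine key_algebra hl (hM (x,t)) ?_ (hden (x,t)) a'v b'v M'v ?_ ?_ ?_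
  · intro i j
    simp only [Mmat, Matrix.of_apply, dotProduct, sigma3, Matrix.mulVec, Fin.sum_univ_two,
      Pi.star_apply, RCLike.star_def, Matrix.cons_val', Matrix.cons_val_zero,
      Matrix.cons_val_one, Matrix.head_cons, Matrix.empty_val', Matrix.cons_val_fin_one,
      Matrix.head_fin_const, phiVec]
    ring
  · funext i
    simp only [ha'v, phiVec, Pi.add_apply, Pi.smul_apply, smul_eq_mul,
      Matrix.diagonal_mul_diagonal, Matrix.mulVec_diagonal]
    ring
  · funext i
    simp only [hb'v, Pi.star_apply, phiVec, Pi.add_apply, Pi.smul_apply, smul_eq_mul,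
      Matrix.diagonal_conjTranspose, Matrix.diagonal_mul_diagonal, Matrix.mulVec_diagonal,
      RCLike.star_def, map_add, _root_.map_mul, map_pow, Complex.conj_I, Complex.conj_conj,
      map_ofNat]
    ring
  · ext i j
    simp only [hM'v, Matrix.of_apply, phiVec, Matrix.diagonal_conjTranspose,
      Matrix.diagonal_mul_diagonal, Matrix.add_apply, Matrix.smul_apply,
      smul_eq_mul, Matrix.mul_diagonal, Matrix.diagonal_mul, vecMulVec_apply,
      Pi.star_apply, Pi.mul_apply, RCLike.star_def]
    ring
end MatDeriv
end

section
/- Let u : ℝ × ℝ → ℂ be a smooth solution of the DNLS equation, let s₁, α₄ ∈ ℝ, and set L(x,t;λ) := −(i/8)·V(Q;λ) + (i·s₁/4)·U(Q;λ) + α₄σ₃. If L satisfies the stationary equation ∂ₓL = U(Q;λ)L − L·U(Q;λ) for every λ ∈ ℂ and every (x,t), then uₜ − 2s₁uₓ + 16i·α₄·u = 0, and consequently the squared modulus ν := |u|² satisfies νₜ = 2s₁νₓ. -/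
open Matrix Complex

/-- Partial derivative in the first (space) variable of a real-valued function. -/
noncomputable def dxR (f : ℝ × ℝ → ℝ) (p : ℝ × ℝ) : ℝ :=
  deriv (fun x => f (x, p.2)) p.1

/-- Partial derivative in the second (time) variable of a real-valued function. -/
noncomputable def dtR (f : ℝ × ℝ → ℝ) (p : ℝ × ℝ) : ℝ :=
  deriv (fun t => f (p.1, t)) p.2

/-- The ansatz matrix `L = −(i/8)V + (i s₁/4)U + α₄ σ₃`. -/
noncomputable def Lmat (u : ℝ × ℝ → ℂ) (s₁ α₄ : ℝ) (l : ℂ) (p : ℝ × ℝ) :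
    Matrix (Fin 2) (Fin 2) ℂ :=
  (-(Complex.I / 8)) • Vmat u l p + (Complex.I * (s₁ : ℂ) / 4) • Umat u l p
    + ((α₄ : ℝ) : ℂ) • sigma3
private lemma I3' : Complex.I ^ 3 = -Complex.I := by
  rw [pow_succ, Complex.I_sq]; ring
private lemma I4' : Complex.I ^ 4 = 1 := by
  rw [pow_succ, I3']; simp
private lemma I5' : Complex.I ^ 5 = Complex.I := by
  rw [pow_succ, I4']; simp
private lemma I6' : Complex.I ^ 6 = -1 := by
  rw [pow_succ, I5', Complex.I_mul_I]

private lemma sliceX (f : ℝ × ℝ → ℂ) (hf : Differentiable ℝ f) (p : ℝ × ℝ) :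
    HasDerivAt (fun x => f (x, p.2)) (fderiv ℝ f p (1, 0)) p.1 := by
  have h1 : HasDerivAt (fun x : ℝ => ((x, p.2) : ℝ × ℝ)) ((1 : ℝ), (0 : ℝ)) p.1 :=
    (hasDerivAt_id p.1).prodMk (hasDerivAt_const _ _)
  exact (hf (p.1, p.2)).hasFDerivAt.comp_hasDerivAt p.1 h1

private lemma sliceT (f : ℝ × ℝ → ℂ) (hf : Differentiable ℝ f) (p : ℝ × ℝ) :
    HasDerivAt (fun t => f (p.1, t)) (fderiv ℝ f p (0, 1)) p.2 := by
  have h1 : HasDerivAt (fun t : ℝ => ((p.1, t) : ℝ × ℝ)) ((0 : ℝ), (1 : ℝ)) p.2 :=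
    (hasDerivAt_const _ _).prodMk (hasDerivAt_id p.2)
  exact (hf (p.1, p.2)).hasFDerivAt.comp_hasDerivAt p.2 h1
set_option maxHeartbeats 1000000 in
/-- If `L = −(i/8)V + (i s₁/4)U + α₄σ₃` satisfies the stationary equation
`∂ₓL = [U, L]` for every `λ`, then `uₜ − 2s₁uₓ + 16iα₄u = 0`, and consequently
`ν = |u|²` satisfies `νₜ = 2s₁νₓ`. -/
theorem stationary_implies_travelling (u : ℝ × ℝ → ℂ) (hu_smooth : ContDiff ℝ (⊤ : ℕ∞) u)
    (hu : IsDNLSSolution u) (s₁ α₄ : ℝ)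
    (hL : ∀ l : ℂ, ∀ p : ℝ × ℝ,
      (Matrix.of fun i j => dx (fun q => Lmat u s₁ α₄ l q i j) p)
        = Umat u l p * Lmat u s₁ α₄ l p - Lmat u s₁ α₄ l p * Umat u l p) :
    (∀ p : ℝ × ℝ, dt u p - 2 * (s₁ : ℂ) * dx u p + 16 * Complex.I * (α₄ : ℂ) * u p = 0) ∧
    (∀ p : ℝ × ℝ, dtR (fun q => Complex.normSq (u q)) p
        = 2 * s₁ * dxR (fun q => Complex.normSq (u q)) p) := by
  have hud : Differentiable ℝ u := hu_smooth.differentiable (by simp)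
  set g : ℝ × ℝ → ℂ := fun p => fderiv ℝ u p (1, 0) with hgdef
  have hg_smooth : ContDiff ℝ (⊤ : ℕ∞) g := (hu_smooth.fderiv_right (by simp)).clm_apply contDiff_const
  have hgd : Differentiable ℝ g := hg_smooth.differentiable (by simp)
  set g2 : ℝ × ℝ → ℂ := fun p => fderiv ℝ g p (1, 0) with hg2def
  have hux : ∀ p : ℝ × ℝ, HasDerivAt (fun x => u (x, p.2)) (g p) p.1 := sliceX u hud
  have hgx : ∀ p : ℝ × ℝ, HasDerivAt (fun x => g (x, p.2)) (g2 p) p.1 := sliceX g hgd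
  have hdxu : ∀ p : ℝ × ℝ, dx u p = g p := fun p => (hux p).deriv
  have hconjx : ∀ p : ℝ × ℝ,
      HasDerivAt (fun x => (starRingEnd ℂ) (u (x, p.2))) ((starRingEnd ℂ) (g p)) p.1 :=
    fun p => (hux p).star
  -- the matrix of x-derivatives of Q
  have hOf : ∀ q : ℝ × ℝ, (Matrix.of fun i j => dx (fun r => Qmat u r i j) q)
      = !![(0:ℂ), Complex.I * g q; Complex.I * (starRingEnd ℂ) (g q), 0] := by
    intro q
    have e00 : (fun r : ℝ × ℝ => Qmat u r 0 0) = fun _ => (0 : ℂ) := by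
      funext r; simp [Qmat]
    have e11 : (fun r : ℝ × ℝ => Qmat u r 1 1) = fun _ => (0 : ℂ) := by
      funext r; simp [Qmat]
    have e01 : (fun r : ℝ × ℝ => Qmat u r 0 1) = fun r => Complex.I * u r := by
      funext r; simp [Qmat]
    have e10 : (fun r : ℝ × ℝ => Qmat u r 1 0) =
        fun r => Complex.I * (starRingEnd ℂ) (u r) := by
      funext r; simp [Qmat]
    ext i j
    fin_cases i <;> fin_cases j
    · show dx (fun r => Qmat u r 0 0) q = 0
      rw [e00]; simp [dx]
    · show dx (fun r => Qmat u r 0 1) q = Complex.I * g q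
      rw [e01]; exact ((hux q).const_mul Complex.I).deriv
    · show dx (fun r => Qmat u r 1 0) q = Complex.I * (starRingEnd ℂ) (g q)
      rw [e10]; exact ((hconjx q).const_mul Complex.I).deriv
    · show dx (fun r => Qmat u r 1 1) q = 0
      rw [e11]; simp [dx]
  -- entry (0,1) of L at λ = 1
  have hentry : ∀ q : ℝ × ℝ, Lmat u s₁ α₄ 1 q 0 1 = (1 - (s₁:ℂ)/2) * u q
      - (1/2) * (u q * u q) * (starRingEnd ℂ) (u q) + (Complex.I/4) * g q := by
    intro q
    simp only [Lmat, Vmat, hOf q]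
    simp [Umat, Qmat, sigma3, Matrix.mul_apply, Fin.sum_univ_two, Matrix.one_fin_two,
      Matrix.vecMul, dotProduct, Matrix.vecHead, Matrix.vecTail]
    ring_nf
    simp only [Complex.I_sq, I3', I4', I5', I6']
    ring
  -- main travelling-wave equation
  have main : ∀ p : ℝ × ℝ,
      dt u p - 2 * (s₁ : ℂ) * dx u p + 16 * Complex.I * (α₄ : ℂ) * u p = 0 := by
    intro p
    -- derivative of L₀₁ in x
    have hbig : HasDerivAt (fun x => (1 - (s₁:ℂ)/2) * u (x, p.2)
          - (1/2) * (u (x, p.2) * u (x, p.2)) * (starRingEnd ℂ) (u (x, p.2))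
          + (Complex.I/4) * g (x, p.2))
        ((1 - (s₁:ℂ)/2) * g p - (u p * g p * (starRingEnd ℂ) (u p)
            + (1/2) * (u p * u p) * (starRingEnd ℂ) (g p))
          + (Complex.I/4) * g2 p) p.1 := by
      have h2 := ((hux p).mul (hux p)).const_mul ((1:ℂ)/2)
      have h3 := h2.mul (hconjx p)
      have h1 := (hux p).const_mul ((1:ℂ) - (s₁:ℂ)/2)
      have h4 := (hgx p).const_mul (Complex.I/4)
      have H := (h1.sub h3).add h4
      convert H using 2
      · rfl
      · rfl
      change _ = _ - (1 / 2 * (g p * u p + u p * g p) * (starRingEnd ℂ) (u p)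
        + 1 / 2 * (u p * u p) * (starRingEnd ℂ) (g p))
      ring
    have key := Matrix.ext_iff.2 (hL 1 p) 0 1
    have hlhs : dx (fun q => Lmat u s₁ α₄ 1 q 0 1) p
        = (1 - (s₁:ℂ)/2) * g p - (u p * g p * (starRingEnd ℂ) (u p)
            + (1/2) * (u p * u p) * (starRingEnd ℂ) (g p))
          + (Complex.I/4) * g2 p := by
      have hfun : (fun x => Lmat u s₁ α₄ 1 (x, p.2) 0 1)
          = fun x => (1 - (s₁:ℂ)/2) * u (x, p.2)
            - (1/2) * (u (x, p.2) * u (x, p.2)) * (starRingEnd ℂ) (u (x, p.2))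
            + (Complex.I/4) * g (x, p.2) := funext fun x => hentry (x, p.2)
      show deriv (fun x => Lmat u s₁ α₄ 1 (x, p.2) 0 1) p.1 = _
      rw [hfun]
      exact hbig.deriv
    have hrhs : (Umat u 1 p * Lmat u s₁ α₄ 1 p - Lmat u s₁ α₄ 1 p * Umat u 1 p) 0 1
        = g p - 4 * Complex.I * (α₄:ℂ) * u p := by
      simp only [Lmat, Vmat, hOf p]
      simp [Umat, Qmat, sigma3, Matrix.mul_apply, Fin.sum_univ_two, Matrix.one_fin_two,
        Matrix.vecMul, dotProduct, Matrix.vecHead, Matrix.vecTail]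
      ring_nf
      simp only [Complex.I_sq, I3', I4', I5', I6']
      ring
    rw [Matrix.of_apply, hlhs, hrhs] at key
    -- the DNLS equation at p
    have hdnls := hu p
    have hdd : dx (fun q => dx u q) p = g2 p := by
      have h : (fun q : ℝ × ℝ => dx u q) = g := funext hdxu
      rw [h]; exact (hgx p).deriv
    have hcube : dx (fun q => (Complex.normSq (u q) : ℂ) * u q) p
        = ((g p * (starRingEnd ℂ) (u p) + u p * (starRingEnd ℂ) (g p)) * u p
            + (u p * (starRingEnd ℂ) (u p)) * g p) := by
      have hfun : (fun q : ℝ × ℝ => (Complex.normSq (u q) : ℂ) * u q)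
          = fun q => (u q * (starRingEnd ℂ) (u q)) * u q := by
        funext q; rw [Complex.mul_conj]
      rw [hfun]
      show deriv (fun x => (u (x, p.2) * (starRingEnd ℂ) (u (x, p.2))) * u (x, p.2)) p.1 = _
      exact (((hux p).mul (hconjx p)).mul (hux p)).deriv
    rw [hdd, hcube] at hdnls
    have hdt : dt u p = fderiv ℝ u p (0, 1) := (sliceT u hud p).deriv
    rw [hdt] at hdnls
    rw [hdt, hdxu p]
    linear_combination (-Complex.I) * hdnls + 4 * key +
      ((fderiv ℝ u p (0, 1))
        + 2 * ((g p * (starRingEnd ℂ) (u p) + u p * (starRingEnd ℂ) (g p)) * u p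
        + u p * (starRingEnd ℂ) (u p) * g p)) * Complex.I_sq
  refine ⟨main, ?_⟩
  intro p
  have hutd : HasDerivAt (fun t => u (p.1, t)) (fderiv ℝ u p (0, 1)) p.2 := sliceT u hud p
  set ut : ℂ := fderiv ℝ u p (0, 1) with hut
  have huxd : HasDerivAt (fun x => u (x, p.2)) (g p) p.1 := hux p
  have hre_t : HasDerivAt (fun t => (u (p.1, t)).re) ut.re p.2 := by
    have := Complex.reCLM.hasFDerivAt.comp_hasDerivAt p.2 hutd
    simp only [Function.comp_def, Complex.reCLM_apply] at this
    exact this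
  have him_t : HasDerivAt (fun t => (u (p.1, t)).im) ut.im p.2 := by
    have := Complex.imCLM.hasFDerivAt.comp_hasDerivAt p.2 hutd
    simp only [Function.comp_def, Complex.imCLM_apply] at this
    exact this
  have hre_x : HasDerivAt (fun x => (u (x, p.2)).re) (g p).re p.1 := by
    have := Complex.reCLM.hasFDerivAt.comp_hasDerivAt p.1 huxd
    simp only [Function.comp_def, Complex.reCLM_apply] at this
    exact this
  have him_x : HasDerivAt (fun x => (u (x, p.2)).im) (g p).im p.1 := by
    have := Complex.imCLM.hasFDerivAt.comp_hasDerivAt p.1 huxd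
    simp only [Function.comp_def, Complex.imCLM_apply] at this
    exact this
  have hnt : dtR (fun q => Complex.normSq (u q)) p
      = ut.re * (u p).re + (u p).re * ut.re + (ut.im * (u p).im + (u p).im * ut.im) := by
    have hfun : (fun t => Complex.normSq (u (p.1, t)))
        = fun t => (u (p.1, t)).re * (u (p.1, t)).re + (u (p.1, t)).im * (u (p.1, t)).im := by
      funext t; rw [Complex.normSq_apply]
    show deriv (fun t => Complex.normSq (u (p.1, t))) p.2 = _
    rw [hfun]
    exact ((hre_t.mul hre_t).add (him_t.mul him_t)).deriv
  have hnx : dxR (fun q => Complex.normSq (u q)) p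
      = (g p).re * (u p).re + (u p).re * (g p).re
        + ((g p).im * (u p).im + (u p).im * (g p).im) := by
    have hfun : (fun x => Complex.normSq (u (x, p.2)))
        = fun x => (u (x, p.2)).re * (u (x, p.2)).re + (u (x, p.2)).im * (u (x, p.2)).im := by
      funext x; rw [Complex.normSq_apply]
    show deriv (fun x => Complex.normSq (u (x, p.2))) p.1 = _
    rw [hfun]
    exact ((hre_x.mul hre_x).add (him_x.mul him_x)).deriv
  have heq := main p
  have hdt2 : dt u p = ut := (sliceT u hud p).deriv
  rw [hdt2, hdxu p] at heq
  have hre := congrArg Complex.re heq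
  have him := congrArg Complex.im heq
  simp only [Complex.add_re, Complex.sub_re, Complex.mul_re, Complex.mul_im,
    Complex.add_im, Complex.sub_im, Complex.I_re, Complex.I_im,
    Complex.ofReal_re, Complex.ofReal_im, Complex.zero_re, Complex.zero_im,
    Complex.re_ofNat, Complex.im_ofNat, Complex.one_re, Complex.one_im] at hre him
  rw [hnt, hnx]
  linear_combination (2 * (u p).re) * hre + (2 * (u p).im) * him
end

section
/- Let λ⁽¹⁾, λ⁽²⁾, λ⁽³⁾, λ⁽⁴⁾ ∈ ℂ. Define s₁ = Σᵢ(λ⁽ⁱ⁾)², s₂ = Σ_{i<j}(λ⁽ⁱ⁾)²(λ⁽ʲ⁾)², s₃ = Σ_{i<j<k}(λ⁽ⁱ⁾)²(λ⁽ʲ⁾)²(λ⁽ᵏ⁾)², s₄ = ∏ᵢ(λ⁽ⁱ⁾)² (so that −λ⁸ + s₁λ⁶ − s₂λ⁴ + s₃λ² − s₄ = −∏ᵢ(λ² − (λ⁽ⁱ⁾)²)), let α₄ = λ⁽¹⁾λ⁽²⁾λ⁽³⁾λ⁽⁴⁾, and let R(X) = X⁴ + 4s₁X³ + (6s₁² −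 8s₂ + 48α₄)X² − (−4s₁³ + 16s₁s₂ − 64s₃ − 32s₁α₄)X + (−s₁² + 4s₂ + 8α₄)². Then R(X) = ∏_{i=1}^{4}(X − νᵢ) as polynomials in X, where ν₁ = −(λ⁽¹⁾+λ⁽²⁾+λ⁽³⁾−λ⁽⁴⁾)², ν₂ = −(λ⁽¹⁾+λ⁽²⁾−λ⁽³⁾+λ⁽⁴⁾)², ν₃ = −(λ⁽¹⁾−λ⁽²⁾+λ⁽³⁾+λ⁽⁴⁾)², ν₄ = −(−λ⁽¹⁾+λ⁽²⁾+λ⁽³⁾+λ⁽⁴⁾)². -/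
/-- Factorization of the quartic `R` in terms of the roots `±λ⁽ⁱ⁾` of the spectral
polynomial, in the case `α₄ = λ⁽¹⁾λ⁽²⁾λ⁽³⁾λ⁽⁴⁾`. -/
theorem R_factorization_plus (l₁ l₂ l₃ l₄ : ℂ) :
    ∀ X : ℂ,
      (fun s₁ s₂ s₃ α₄ : ℂ =>
        X ^ 4 + 4 * s₁ * X ^ 3 + (6 * s₁ ^ 2 - 8 * s₂ + 48 * α₄) * X ^ 2
          - (-4 * s₁ ^ 3 + 16 * s₁ * s₂ - 64 * s₃ - 32 * s₁ * α₄) * X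
          + (-s₁ ^ 2 + 4 * s₂ + 8 * α₄) ^ 2)
        (l₁ ^ 2 + l₂ ^ 2 + l₃ ^ 2 + l₄ ^ 2)
        (l₁ ^ 2 * l₂ ^ 2 + l₁ ^ 2 * l₃ ^ 2 + l₁ ^ 2 * l₄ ^ 2
          + l₂ ^ 2 * l₃ ^ 2 + l₂ ^ 2 * l₄ ^ 2 + l₃ ^ 2 * l₄ ^ 2)
        (l₁ ^ 2 * l₂ ^ 2 * l₃ ^ 2 + l₁ ^ 2 * l₂ ^ 2 * l₄ ^ 2
          + l₁ ^ 2 * l₃ ^ 2 * l₄ ^ 2 + l₂ ^ 2 * l₃ ^ 2 * l₄ ^ 2)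
        (l₁ * l₂ * l₃ * l₄)
      = (X - -(l₁ + l₂ + l₃ - l₄) ^ 2) * (X - -(l₁ + l₂ - l₃ + l₄) ^ 2)
          * (X - -(l₁ - l₂ + l₃ + l₄) ^ 2) * (X - -(-l₁ + l₂ + l₃ + l₄) ^ 2) := by
  intro X; ring
end

section
/- (Symmetry of the N-fold transformed solution; Theorem 5.4.) Let λ₁,…,λ_N ∈ ℂ satisfy λⱼ* ≠ λᵢ and λⱼ* ≠ −λᵢ for all i,j. Let φᵢ = (φᵢ⁽¹⁾, φᵢ⁽²⁾)ᵀ : ℝ² → ℂ² be differentiable and satisfy the involution φᵢ⁽¹⁾(−ξ,−t) = −i·φᵢ⁽²⁾(ξ,t) and φᵢ⁽²⁾(−ξ,−t) = i·φᵢ⁽¹⁾(ξ,t) for all (ξ,t), and let ũ : ℝ² → ℂ be differentiable with ũ(ξ,t) = −ũ(−ξ,−t)*. Assume M(ξ,t) is invertible for every (ξ,t). Then u_N := ∂_ξ( ũ + i·φ⁽²⁾†M⁻¹φ⁽¹⁾ ) satisfies u_N(ξ,t) = u_N(−ξ,−t)* for all (ξ,t). -/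
open Matrix Complex

/-!
The involution says `φᵢ(-p) = σ₂ φᵢ(p)`. Since `σ₂` is unitary and anticommutes with `σ₃`, this
turns `M(-p)` into `-M(p)ᴴ`, and then the quadratic form `φ⁽²⁾†M⁻¹φ⁽¹⁾` at `-p` is the complex
conjugate of its value at `p`. Together with the symmetry of `ũ`, the primitive
`F = ũ + i φ⁽²⁾†M⁻¹φ⁽¹⁾` of `u_N` satisfies `F(-p) = -F(p)*`, and differentiating this identity in
`ξ` gives `u_N(p) = u_N(-p)*`.
-/

theorem Ring.inverse_neg {M₀ : Type*} [MonoidWithZero M₀] [HasDistribNeg M₀] (a : M₀) :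
    Ring.inverse (-a) = -Ring.inverse a := by
  by_cases ha : IsUnit a
  · obtain ⟨u, rfl⟩ := ha
    rw [← Units.val_neg, Ring.inverse_unit, Ring.inverse_unit, _root_.inv_neg, Units.val_neg]
  · rw [Ring.inverse_non_unit _ ha, Ring.inverse_non_unit _ (mt (IsUnit.neg_iff a).mp ha), neg_zero]

theorem Matrix.inv_neg {n α : Type*} [Fintype n] [DecidableEq n] [CommRing α]
    (A : Matrix n n α) : (-A)⁻¹ = -A⁻¹ := by
  simp only [nonsing_inv_eq_ringInverse, Ring.inverse_neg]

section StarDotProduct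

variable {n α : Type*} [Fintype n] [CommRing α] [StarRing α]

theorem Matrix.star_star_dotProduct_mulVec (B : Matrix n n α) (v w : n → α) :
    star (star v ⬝ᵥ (B *ᵥ w)) = star w ⬝ᵥ (Bᴴ *ᵥ v) := by
  rw [star_dotProduct, star_star, star_mulVec, ← dotProduct_mulVec]

theorem Matrix.star_mulVec_dotProduct_mulVec_mulVec (U B : Matrix n n α) (v w : n → α) :
    star (U *ᵥ v) ⬝ᵥ (B *ᵥ (U *ᵥ w)) = star v ⬝ᵥ ((Uᴴ * B * U) *ᵥ w) := by
  rw [star_mulVec, ← dotProduct_mulVec, mulVec_mulVec, mulVec_mulVec, dotProduct_mulVec,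
    ← dotProduct_mulVec]

end StarDotProduct

theorem sigma3_conjTranspose : sigma3ᴴ = sigma3 := by
  ext i j; fin_cases i <;> fin_cases j <;> simp [sigma3]

/-- The involution on the eigenfunctions reads `φ(-ξ,-t) = σ₂ φ(ξ,t)`. -/
noncomputable def sigma2 : Matrix (Fin 2) (Fin 2) ℂ := !![0, -I; I, 0]

theorem sigma2_conjTranspose_mul_self : sigma2ᴴ * sigma2 = 1 := by
  ext i j; fin_cases i <;> fin_cases j <;> simp [sigma2, mul_apply, Fin.sum_univ_two]

theorem sigma2_conjTranspose_mul_sigma3_mul_self : sigma2ᴴ * sigma3 * sigma2 = -sigma3 := by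
  ext i j; fin_cases i <;> fin_cases j <;> simp [sigma2, sigma3, mul_apply, Fin.sum_univ_two]

theorem Mmat_eq_neg_conjTranspose_of_sigma2 {N : ℕ} (l : Fin N → ℂ)
    {φ : Fin N → ℝ × ℝ → Fin 2 → ℂ} {p p' : ℝ × ℝ}
    (h : ∀ i, φ i p' = sigma2 *ᵥ φ i p) : Mmat l φ p' = -(Mmat l φ p)ᴴ := by
  ext i j
  have hdot : star (φ j p') ⬝ᵥ φ i p' = star (φ j p) ⬝ᵥ φ i p := by
    rw [← one_mulVec (φ i p'), h, h, star_mulVec_dotProduct_mulVec_mulVec, Matrix.mul_one,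
      sigma2_conjTranspose_mul_self, one_mulVec]
  have hdot_sigma3 :
      star (φ j p') ⬝ᵥ (sigma3 *ᵥ φ i p') = -(star (φ j p) ⬝ᵥ (sigma3 *ᵥ φ i p)) := by
    rw [h, h, star_mulVec_dotProduct_mulVec_mulVec, sigma2_conjTranspose_mul_sigma3_mul_self,
      neg_mulVec, dotProduct_neg]
  have hconj : star (star (φ i p) ⬝ᵥ φ j p) = star (φ j p) ⬝ᵥ φ i p :=
    (star_dotProduct _ _).symm
  have hconj_sigma3 :
      star (star (φ i p) ⬝ᵥ (sigma3 *ᵥ φ j p)) = star (φ j p) ⬝ᵥ (sigma3 *ᵥ φ i p) := by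
    rw [star_star_dotProduct_mulVec, sigma3_conjTranspose]
  rw [neg_apply, conjTranspose_apply]
  simp only [Mmat, of_apply, hdot, hdot_sigma3, star_mul', star_sub, star_div₀, hconj,
    hconj_sigma3, star_add, RCLike.star_def, conj_conj]
  rw [← neg_sub (starRingEnd ℂ (l j)) (l i), div_neg]
  ring

theorem star_smul_dotProduct_inv_neg_conjTranspose_mulVec {n : Type*} [Fintype n] [DecidableEq n]
    (A : Matrix n n ℂ) (a b : n → ℂ) :
    star (I • a) ⬝ᵥ ((-Aᴴ)⁻¹ *ᵥ (-I • b)) = star (star b ⬝ᵥ (A⁻¹ *ᵥ a)) := by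
  rw [Matrix.inv_neg, ← conjTranspose_nonsing_inv, star_star_dotProduct_mulVec, star_smul,
    mulVec_smul, neg_mulVec, smul_dotProduct, dotProduct_smul, dotProduct_neg]
  simp only [smul_eq_mul, star_def, conj_I]
  linear_combination (-(star a ⬝ᵥ (A⁻¹ᴴ *ᵥ b))) * I_mul_I

theorem eq_sigma2_mulVec {v w : Fin 2 → ℂ} (h0 : w 0 = -I * v 1) (h1 : w 1 = I * v 0) :
    w = sigma2 *ᵥ v := by
  ext k; fin_cases k <;> simp [sigma2, mulVec, dotProduct, Fin.sum_univ_two, h0, h1]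

theorem dx_eq_star_dx_neg {F : ℝ × ℝ → ℂ} (hF : ∀ p, F (-p) = -star (F p)) (p : ℝ × ℝ) :
    dx F p = star (dx F (-p)) := by
  have reflect : (fun x => F (x, p.2)) = fun x => -star (F (-x, -p.2)) := by
    funext x
    rw [← hF, Prod.neg_mk, neg_neg, neg_neg]
  rw [dx, dx, reflect, deriv.fun_neg, deriv.star, deriv_comp_neg (fun y => F (y, -p.2)),
    star_neg, neg_neg]
  rfl

/-- `u_N = ∂_ξ primitiveUN`. -/
noncomputable def primitiveUN {N : ℕ} (l : Fin N → ℂ) (φ : Fin N → ℝ × ℝ → Fin 2 → ℂ)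
    (utilde : ℝ × ℝ → ℂ) (p : ℝ × ℝ) : ℂ :=
  utilde p + I * (star (phiVec φ 1 p) ⬝ᵥ ((Mmat l φ p)⁻¹ *ᵥ phiVec φ 0 p))

theorem primitiveUN_neg {N : ℕ} (l : Fin N → ℂ) {φ : Fin N → ℝ × ℝ → Fin 2 → ℂ}
    (hinv : ∀ i, ∀ ξ t : ℝ,
      φ i (-ξ, -t) 0 = -I * φ i (ξ, t) 1 ∧ φ i (-ξ, -t) 1 = I * φ i (ξ, t) 0)
    {utilde : ℝ × ℝ → ℂ} (hu_sym : ∀ ξ t : ℝ, utilde (ξ, t) = -starRingEnd ℂ (utilde (-ξ, -t)))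
    (p : ℝ × ℝ) : primitiveUN l φ utilde (-p) = -star (primitiveUN l φ utilde p) := by
  obtain ⟨ξ, t⟩ := p
  have hφ (i) : φ i (-(ξ, t)) = sigma2 *ᵥ φ i (ξ, t) :=
    eq_sigma2_mulVec (hinv i ξ t).1 (hinv i ξ t).2
  have h0 : phiVec φ 0 (-(ξ, t)) = -I • phiVec φ 1 (ξ, t) := funext fun i => (hinv i ξ t).1
  have h1 : phiVec φ 1 (-(ξ, t)) = I • phiVec φ 0 (ξ, t) := funext fun i => (hinv i ξ t).2
  have hu : utilde (-(ξ, t)) = -star (utilde (ξ, t)) := by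
    rw [hu_sym ξ t, star_neg, RCLike.star_def, conj_conj, neg_neg, Prod.neg_mk]
  rw [primitiveUN, primitiveUN, h0, h1, Mmat_eq_neg_conjTranspose_of_sigma2 l hφ,
    star_smul_dotProduct_inv_neg_conjTranspose_mulVec, hu, star_add, star_mul', neg_add,
    RCLike.star_def, conj_I]
  ring

theorem uN_symmetry_general {N : ℕ} (l : Fin N → ℂ)
    (φ : Fin N → ℝ × ℝ → Fin 2 → ℂ)
    (hinv : ∀ i, ∀ ξ t : ℝ,
      φ i (-ξ, -t) 0 = -Complex.I * φ i (ξ, t) 1 ∧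
      φ i (-ξ, -t) 1 = Complex.I * φ i (ξ, t) 0)
    (utilde : ℝ × ℝ → ℂ)
    (hu_sym : ∀ ξ t : ℝ, utilde (ξ, t) = -starRingEnd ℂ (utilde (-ξ, -t))) :
    ∀ ξ t : ℝ,
      dx (fun q => utilde q
          + Complex.I * (star (phiVec φ 1 q) ⬝ᵥ ((Mmat l φ q)⁻¹ *ᵥ phiVec φ 0 q))) (ξ, t)
        = starRingEnd ℂ
            (dx (fun q => utilde q
              + Complex.I * (star (phiVec φ 1 q) ⬝ᵥ ((Mmat l φ q)⁻¹ *ᵥ phiVec φ 0 q)))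
              (-ξ, -t)) :=
  fun ξ t => dx_eq_star_dx_neg (primitiveUN_neg l hinv hu_sym) (ξ, t)

/-- Symmetry of the N-fold transformed solution: if the eigenfunctions satisfy the
involution and `ũ(ξ,t) = −ũ(−ξ,−t)*`, then
`u_N = ∂_ξ(ũ + i φ⁽²⁾†M⁻¹φ⁽¹⁾)` satisfies `u_N(ξ,t) = u_N(−ξ,−t)*`. -/
theorem uN_symmetry {N : ℕ} (l : Fin N → ℂ)
    (hl : ∀ i j, starRingEnd ℂ (l j) ≠ l i ∧ starRingEnd ℂ (l j) ≠ -(l i))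
    (φ : Fin N → ℝ × ℝ → Fin 2 → ℂ)
    (hφ_diff : ∀ i, Differentiable ℝ (φ i))
    (hinv : ∀ i, ∀ ξ t : ℝ,
      φ i (-ξ, -t) 0 = -Complex.I * φ i (ξ, t) 1 ∧
      φ i (-ξ, -t) 1 = Complex.I * φ i (ξ, t) 0)
    (utilde : ℝ × ℝ → ℂ) (hu_diff : Differentiable ℝ utilde)
    (hu_sym : ∀ ξ t : ℝ, utilde (ξ, t) = -starRingEnd ℂ (utilde (-ξ, -t)))
    (hM : ∀ p : ℝ × ℝ, IsUnit (Mmat l φ p)) :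
    ∀ ξ t : ℝ,
      dx (fun q => utilde q
          + Complex.I * (star (phiVec φ 1 q) ⬝ᵥ ((Mmat l φ q)⁻¹ *ᵥ phiVec φ 0 q))) (ξ, t)
        = starRingEnd ℂ
            (dx (fun q => utilde q
              + Complex.I * (star (phiVec φ 1 q) ⬝ᵥ ((Mmat l φ q)⁻¹ *ᵥ phiVec φ 0 q)))
              (-ξ, -t)) :=
  uN_symmetry_general l φ hinv utilde hu_sym
end

section
/- Let u : ℝ² → ℂ be smooth, let λ₁,…,λ_N ∈ ℂ satisfy λⱼ* ≠ λᵢ and λⱼ* ≠ −λᵢ for all i,j, and for each i let φᵢ : ℝ² → ℂ² be a differentiable solution of the spatial Lax equation ∂ₓφᵢ = U(Q;λᵢ)φᵢ. Then the x-derivative of the matrix M is given by ∂ₓM = 4i·Λ·( Λ·φ⁽¹⁾(φ⁽¹⁾)† − u·φ⁽²⁾(φ⁽¹⁾)† − φ⁽²⁾(φ⁽²⁾)†·Λ† )·Λ†. -/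
open Matrix Complex

/-- The spatial derivative of the matrix `M`:
`∂ₓM = 4iΛ(Λφ⁽¹⁾(φ⁽¹⁾)† − uφ⁽²⁾(φ⁽¹⁾)† − φ⁽²⁾(φ⁽²⁾)†Λ†)Λ†`. -/
theorem Mmat_x_derivative {N : ℕ} (u : ℝ × ℝ → ℂ) (hu_smooth : ContDiff ℝ (⊤ : ℕ∞) u)
    (l : Fin N → ℂ)
    (hl : ∀ i j, starRingEnd ℂ (l j) ≠ l i ∧ starRingEnd ℂ (l j) ≠ -(l i))
    (φ : Fin N → ℝ × ℝ → Fin 2 → ℂ)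
    (hφ_diff : ∀ i, Differentiable ℝ (φ i))
    (hφ : ∀ i, ∀ p : ℝ × ℝ, dxv (φ i) p = Umat u (l i) p *ᵥ φ i p) :
    ∀ p : ℝ × ℝ,
      (Matrix.of fun i j => dx (fun q => Mmat l φ q i j) p)
        = (4 * Complex.I) •
          (Matrix.diagonal l *
            (Matrix.diagonal l *
                (Matrix.of fun i j => phiVec φ 0 p i * starRingEnd ℂ (phiVec φ 0 p j))
              - u p • (Matrix.of fun i j => phiVec φ 1 p i * starRingEnd ℂ (phiVec φ 0 p j))
              - (Matrix.of fun i j => phiVec φ 1 p i * starRingEnd ℂ (phiVec φ 1 p j))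
                  * (Matrix.diagonal l)ᴴ)
            * (Matrix.diagonal l)ᴴ) := by
  intro p
  have key : ∀ (m : Fin N) (k : Fin 2),
      HasDerivAt (fun x => φ m (x, p.2) k) ((Umat u (l m) p *ᵥ φ m p) k) p.1 := by
    intro m k
    have h1 : Differentiable ℝ (fun q : ℝ × ℝ => φ m q k) := differentiable_pi.mp (hφ_diff m) k
    have hdiff : Differentiable ℝ (fun x : ℝ => φ m (x, p.2) k) :=
      h1.comp (differentiable_id.prodMk (differentiable_const _))
    have h2 := (hdiff p.1).hasDerivAt
    have h3 : deriv (fun x => φ m (x, p.2) k) p.1 = dxv (φ m) p k := rfl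
    rw [h3, hφ m p] at h2
    exact h2
  ext i j
  have hlam1 : starRingEnd ℂ (l j) - l i ≠ 0 := sub_ne_zero.mpr (hl i j).1
  have hlam2 : starRingEnd ℂ (l j) + l i ≠ 0 := by
    intro h
    exact (hl i j).2 (eq_neg_of_add_eq_zero_left h)
  have hU : ∀ (m : Fin N),
      (Umat u (l m) p *ᵥ φ m p) 0
        = -2 * Complex.I * (l m) ^ 2 * φ m p 0 + 2 * Complex.I * (l m) * (u p) * φ m p 1 ∧
      (Umat u (l m) p *ᵥ φ m p) 1
        = 2 * Complex.I * (l m) ^ 2 * φ m p 1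
          + 2 * Complex.I * (l m) * (starRingEnd ℂ (u p)) * φ m p 0 := by
    intro m
    refine ⟨?_, ?_⟩ <;>
    · simp only [Umat, sigma3, Qmat, Matrix.mulVec, dotProduct, Fin.sum_univ_two,
        Matrix.add_apply, Matrix.smul_apply, Matrix.of_apply,
        Matrix.cons_val_zero, Matrix.cons_val_one, Matrix.head_cons, smul_eq_mul]
      ring
  have hMeq : (fun x : ℝ => Mmat l φ (x, p.2) i j)
      = fun x => ((star (φ j (x, p.2) 0) * φ i (x, p.2) 0
            + star (φ j (x, p.2) 1) * φ i (x, p.2) 1) / (starRingEnd ℂ (l j) - l i)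
          - (star (φ j (x, p.2) 0) * φ i (x, p.2) 0
            - star (φ j (x, p.2) 1) * φ i (x, p.2) 1) / (starRingEnd ℂ (l j) + l i))
          * (l i * starRingEnd ℂ (l j)) := by
    funext x
    simp only [Mmat, sigma3, Matrix.mulVec, dotProduct, Fin.sum_univ_two, Matrix.of_apply,
      Pi.star_apply, Matrix.cons_val_zero, Matrix.cons_val_one, Matrix.head_cons]
    ring
  have h1 := ((key j 0).star.mul (key i 0)).add ((key j 1).star.mul (key i 1))
  have h2 := ((key j 0).star.mul (key i 0)).sub ((key j 1).star.mul (key i 1))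
  have h := ((h1.div_const (starRingEnd ℂ (l j) - l i)).sub
      (h2.div_const (starRingEnd ℂ (l j) + l i))).mul_const (l i * starRingEnd ℂ (l j))
  have hgoal : dx (fun q => Mmat l φ q i j) p
      = deriv (fun x => Mmat l φ (x, p.2) i j) p.1 := rfl
  simp only [Matrix.of_apply]
  simp only [Pi.mul_apply, Pi.add_apply, Pi.sub_apply] at h
  rw [hgoal, hMeq, h.deriv, (hU i).1, (hU i).2, (hU j).1, (hU j).2]
  simp only [Matrix.smul_apply, Matrix.sub_apply, Matrix.of_apply,
    Matrix.diagonal_conjTranspose, Matrix.diagonal_mul, Matrix.mul_diagonal,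
    Pi.smul_apply, Pi.star_apply, smul_eq_mul, phiVec, Complex.star_def,
    _root_.map_add, _root_.map_mul, map_neg, map_pow, _root_.map_ofNat,
    Complex.conj_I, Complex.conj_conj]
  field_simp
  ring
end
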